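/- arXiv:2306.16172 — 11 statements merged into one kernel-verified Lean document; each statement's English description precedes it below -/
import Mathlib

section
/- Let A be the complex Banach space ℓ¹ of absolutely summable complex sequences, made into a normed algebra under pointwise multiplication, and let a ∈ A be the sequence a(n) = 1/(n+1)² (n = 0, 1, 2, …). Then the spatial numerical range of a is V_A(a) = (0, 1]; in particular V_A(a) is not a closed subset of ℂ. -/
open scoped ENNReal

/-- `ℓ¹`: the space of absolutely summable complex sequences. -/
noncomputable abbrev ellOne : Type := lp (fun _ : ℕ => ℂ) 1

lemma ellOne.mul_memℓp (f g : ellOne) : Memℓp (fun n => f n * g n) 1 := by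
  apply memℓp_gen
  simp only [ENNReal.toReal_one, Real.rpow_one]
  have hf : Summable fun n => ‖f n‖ := by
    simpa using (lp.memℓp f).summable (by norm_num)
  refine Summable.of_nonneg_of_le (fun n => norm_nonneg _) (fun n => ?_) (hf.mul_right ‖g‖)
  rw [norm_mul]
  exact mul_le_mul_of_nonneg_left (lp.norm_apply_le_norm one_ne_zero g n) (norm_nonneg _)

/-- Pointwise multiplication on `ℓ¹`. -/
noncomputable instance : Mul ellOne :=
  ⟨fun f g => ⟨fun n => f n * g n, ellOne.mul_memℓp f g⟩⟩

lemma ellOne.mul_apply (f g : ellOne) (n : ℕ) : (f * g) n = f n * g n := rfl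

lemma ellOne.norm_eq (f : ellOne) : ‖f‖ = ∑' n, ‖f n‖ := by
  have h := lp.norm_eq_tsum_rpow (p := 1) (by norm_num) f
  simpa using h

/-- `(ℓ¹, ‖·‖₁)` with pointwise multiplication is a (non-unital) normed algebra. -/
noncomputable instance : NonUnitalNormedRing ellOne :=
  { (inferInstance : NormedAddCommGroup ellOne) with
    mul := (· * ·)
    left_distrib := fun f g h => by
      apply lp.ext; funext n
      show f n * (g n + h n) = f n * g n + f n * h n
      exact mul_add _ _ _
    right_distrib := fun f g h => by
      apply lp.ext; funext n
      show (f n + g n) * h n = f n * h n + g n * h n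
      exact add_mul _ _ _
    mul_assoc := fun f g h => by
      apply lp.ext; funext n
      show (f n * g n) * h n = f n * (g n * h n)
      exact mul_assoc _ _ _
    zero_mul := fun f => by
      apply lp.ext; funext n
      show (0 : ℂ) * f n = 0
      exact zero_mul _
    mul_zero := fun f => by
      apply lp.ext; funext n
      show f n * (0 : ℂ) = 0
      exact mul_zero _
    norm_mul_le := fun f g => by
      rw [ellOne.norm_eq (f * g), ellOne.norm_eq f]
      have hf : Summable fun n => ‖f n‖ := by
        simpa using (lp.memℓp f).summable (by norm_num)
      have h1 : Summable fun n => ‖f n * g n‖ := by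
        simpa using (ellOne.mul_memℓp f g).summable (by norm_num)
      calc (∑' n, ‖(f * g) n‖) = ∑' n, ‖f n * g n‖ := by rfl
        _ ≤ ∑' n, ‖f n‖ * ‖g‖ := by
            refine Summable.tsum_le_tsum (fun n => ?_) h1 (hf.mul_right _)
            rw [norm_mul]
            exact mul_le_mul_of_nonneg_left (lp.norm_apply_le_norm one_ne_zero g n)
              (norm_nonneg _)
        _ = (∑' n, ‖f n‖) * ‖g‖ := tsum_mul_right }

/-- The spatial numerical range `V_A(a) = ⋃ {V_A(a; x) : x ∈ A, ‖x‖ = 1}` where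
`V_A(a; x) = {φ (a * x) : φ ∈ D_A(x)}`. -/
def spatialNumericalRange {A : Type*} [NonUnitalNormedRing A] [NormedSpace ℂ A]
    (a : A) : Set ℂ :=
  {z | ∃ x : A, ‖x‖ = 1 ∧ ∃ φ : A →L[ℂ] ℂ, ‖φ‖ = 1 ∧ φ x = 1 ∧ φ (a * x) = z}

lemma ellOne.a_memℓp : Memℓp (fun n : ℕ => 1 / ((n : ℂ) + 1) ^ 2) 1 := by
  apply memℓp_gen
  simp only [ENNReal.toReal_one, Real.rpow_one]
  have h : Summable fun n : ℕ => 1 / ((n : ℝ) + 1) ^ 2 := by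
    have h2 : Summable fun n : ℕ => 1 / (n : ℝ) ^ 2 :=
      Real.summable_one_div_nat_pow.mpr one_lt_two
    have h3 := (summable_nat_add_iff 1).mpr h2
    simpa using h3
  refine h.congr fun n => ?_
  rw [norm_div, norm_one, norm_pow]
  congr 2
  have : ((n : ℂ) + 1) = ((n + 1 : ℕ) : ℂ) := by push_cast; ring
  rw [this, Complex.norm_natCast]
  push_cast; ring

/-- The sequence `a(n) = 1/(n+1)²` as an element of `ℓ¹`. -/
noncomputable def ellOne.a : ellOne := ⟨fun n : ℕ => 1 / ((n : ℂ) + 1) ^ 2, ellOne.a_memℓp⟩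

namespace ellOneAux

lemma summable_norm (f : ellOne) : Summable fun n => ‖f n‖ := by
  simpa using (lp.memℓp f).summable (by norm_num)

lemma summable (f : ellOne) : Summable fun n => f n :=
  (summable_norm f).of_norm

noncomputable def phiSum : ellOne →L[ℂ] ℂ :=
  LinearMap.mkContinuous
    { toFun := fun f => ∑' n, f n
      map_add' := fun f g => by
        simp only [lp.coeFn_add, Pi.add_apply]
        exact Summable.tsum_add (summable f) (summable g)
      map_smul' := fun c f => by
        simp only [lp.coeFn_smul, Pi.smul_apply, smul_eq_mul, RingHom.id_apply]
        exact tsum_mul_left }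
    1 (fun f => by
      simpa [ellOne.norm_eq f] using norm_tsum_le_tsum_norm (summable_norm f))

lemma phiSum_apply (f : ellOne) : phiSum f = ∑' n, f n := rfl

lemma repr (φ : ellOne →L[ℂ] ℂ) (f : ellOne) :
    HasSum (fun n => f n * φ (lp.single 1 n 1)) (φ f) := by
  have h := ((lp.hasSum_single (E := fun _ : ℕ => ℂ) (p := 1) (by norm_num) f).mapL φ)
  refine h.congr_fun fun n => ?_
  have : lp.single 1 n (f n) = f n • lp.single (E := fun _ : ℕ => ℂ) 1 n 1 := by
    rw [← lp.single_smul]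
    congr 1
    simp
  rw [this, map_smul, smul_eq_mul]

lemma key (z : ℂ) (r : ℝ) (h1 : ‖z‖ ≤ r) (h2 : z.re = r) : z = r := by
  have h3 : r ≤ ‖z‖ := h2 ▸ (Complex.re_le_norm z)
  have h4 : ‖z‖ = r := le_antisymm h1 h3
  have h5 : z.re ^ 2 + z.im ^ 2 = r ^ 2 := by
    have := Complex.sq_norm z
    rw [Complex.normSq_apply] at this
    rw [← h4]
    simpa [sq] using this.symm
  have h6 : z.im = 0 := by
    have h7 : z.im ^ 2 = 0 := by rw [h2] at h5; linarith
    exact pow_eq_zero_iff two_ne_zero |>.mp h7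
  exact Complex.ext (by simp [h2]) (by simp [h6])

lemma norm_single_one (n : ℕ) : ‖lp.single (E := fun _ : ℕ => ℂ) 1 n 1‖ = 1 := by
  simpa using lp.norm_single (p := 1) (by norm_num) (fun _ : ℕ => (1 : ℂ)) n

lemma a_apply (n : ℕ) : ellOne.a n = 1 / ((n : ℂ) + 1) ^ 2 := rfl

lemma forward : spatialNumericalRange ellOne.a ⊆ Complex.ofReal '' Set.Ioc (0 : ℝ) 1 := by
  rintro z ⟨x, hx, φ, hφ, hφx, hφax⟩
  set t : ℕ → ℂ := fun n => φ (lp.single 1 n 1) with ht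
  have htle : ∀ n, ‖t n‖ ≤ 1 := fun n => by
    have h := φ.le_opNorm (lp.single 1 n 1)
    rwa [hφ, one_mul, norm_single_one n] at h
  have hsum1 : HasSum (fun n => x n * t n) 1 := hφx ▸ repr φ x
  have hnorm1 : HasSum (fun n => ‖x n‖) 1 := by
    have h := (summable_norm x).hasSum
    rwa [← ellOne.norm_eq x, hx] at h
  have hre : HasSum (fun n => (x n * t n).re) 1 := by
    simpa using hsum1.mapL Complex.reCLM
  have hterm_le : ∀ n, ‖x n * t n‖ ≤ ‖x n‖ := fun n => by
    rw [norm_mul]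
    calc ‖x n‖ * ‖t n‖ ≤ ‖x n‖ * 1 := by
          exact mul_le_mul_of_nonneg_left (htle n) (norm_nonneg _)
      _ = ‖x n‖ := mul_one _
  have hre_le : ∀ n, (x n * t n).re ≤ ‖x n‖ := fun n =>
    (Complex.re_le_norm _).trans (hterm_le n)
  have heq : ∀ n, x n * t n = (‖x n‖ : ℂ) := by
    intro n
    refine key _ _ (hterm_le n) ?_
    by_contra hne
    have hlt : (x n * t n).re < ‖x n‖ := lt_of_le_of_ne (hre_le n) hne
    have h := Summable.tsum_lt_tsum hre_le hlt hre.summable hnorm1.summable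
    rw [hre.tsum_eq, hnorm1.tsum_eq] at h
    exact lt_irrefl _ h
  set g : ℕ → ℝ := fun n => 1 / ((n : ℝ) + 1) ^ 2 * ‖x n‖ with hg
  have hg0 : ∀ n, 0 ≤ g n := fun n => by positivity
  have hgle : ∀ n, g n ≤ ‖x n‖ := fun n => by
    have h1 : 1 / ((n : ℝ) + 1) ^ 2 ≤ 1 := by
      rw [div_le_one (by positivity)]
      nlinarith [Nat.cast_nonneg (α := ℝ) n]
    calc g n ≤ 1 * ‖x n‖ := mul_le_mul_of_nonneg_right h1 (norm_nonneg _)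
      _ = ‖x n‖ := one_mul _
  have hgsum : Summable g := Summable.of_nonneg_of_le hg0 hgle hnorm1.summable
  have hax : HasSum (fun n => ((g n : ℝ) : ℂ)) (φ (ellOne.a * x)) := by
    refine (repr φ (ellOne.a * x)).congr_fun fun n => ?_
    rw [ellOne.mul_apply, a_apply, mul_assoc, heq n, hg]
    rw [Complex.ofReal_mul]
    push_cast
    ring
  have hofr : HasSum (fun n => ((g n : ℝ) : ℂ)) ((∑' n, g n : ℝ) : ℂ) :=
    Complex.hasSum_ofReal.mpr hgsum.hasSum
  have hzval : z = ((∑' n, g n : ℝ) : ℂ) := by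
    rw [← hφax]
    exact hax.unique hofr
  refine ⟨∑' n, g n, ⟨?_, ?_⟩, hzval.symm⟩
  · have hxne : ∃ m, x m ≠ 0 := by
      by_contra h
      push_neg at h
      have hx0 : x = 0 := by
        apply lp.ext
        funext k
        simpa using h k
      rw [hx0, norm_zero] at hx
      norm_num at hx
    obtain ⟨m, hm⟩ := hxne
    refine Summable.tsum_pos hgsum hg0 m ?_
    have : 0 < ‖x m‖ := norm_pos_iff.mpr hm
    positivity
  · have h := Summable.tsum_le_tsum hgle hgsum hnorm1.summable
    rwa [hnorm1.tsum_eq] at h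

lemma norm_phiSum : ‖phiSum‖ = 1 := by
  refine le_antisymm (LinearMap.mkContinuous_norm_le _ zero_le_one _) ?_
  have h1 : phiSum (lp.single 1 0 1) = 1 := by
    rw [phiSum_apply]
    rw [tsum_eq_single 0 (fun m hm => lp.single_apply_ne 1 0 _ hm)]
    exact lp.single_apply_self 1 0 1
  have h2 := phiSum.le_opNorm (lp.single (E := fun _ : ℕ => ℂ) 1 0 1)
  rw [h1, norm_single_one 0, mul_one, norm_one] at h2
  exact h2

lemma backward : Complex.ofReal '' Set.Ioc (0 : ℝ) 1 ⊆ spatialNumericalRange ellOne.a := by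
  rintro z ⟨r, ⟨hr0, hr1⟩, rfl⟩
  obtain ⟨n, hn⟩ := exists_nat_gt (1 / r)
  have hn1 : 1 ≤ (n : ℝ) := by
    have h1 : (1 : ℝ) ≤ 1 / r := by
      rw [le_div_iff₀ hr0]; linarith
    linarith
  have hnr : 1 < (n : ℝ) * r := by
    rw [div_lt_iff₀ hr0] at hn
    linarith
  set α : ℝ := 1 / ((n : ℝ) + 1) ^ 2 with hαdef
  have hα0 : 0 < α := by positivity
  have hαr : α < r := by
    rw [hαdef, div_lt_iff₀ (by positivity)]
    nlinarith [Nat.cast_nonneg (α := ℝ) n]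
  have hα1 : α < 1 := hαr.trans_le hr1
  have hαc : ((α : ℝ) : ℂ) = 1 / ((n : ℂ) + 1) ^ 2 := by
    rw [hαdef]; push_cast; ring
  obtain ⟨t, ht0, ht1, hkey⟩ : ∃ t : ℝ, 0 ≤ t ∧ t ≤ 1 ∧ t + (1 - t) * α = r := by
    refine ⟨(r - α) / (1 - α), div_nonneg (by linarith) (by linarith), ?_, ?_⟩
    · rw [div_le_one (by linarith)]; linarith
    · have h1α : (1 : ℝ) - α ≠ 0 := sub_ne_zero.mpr (ne_of_gt hα1)
      field_simp [h1α]
      ring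
  have hn0 : n ≠ 0 := by
    intro h; rw [h] at hn1; norm_num at hn1
  set X : ellOne := ((t : ℂ)) • lp.single 1 0 1 + (((1 - t : ℝ) : ℂ)) • lp.single 1 n 1
    with hXdef
  have hX : ∀ k, X k = if k = 0 then (t : ℂ) else if k = n then ((1 - t : ℝ) : ℂ) else 0 := by
    intro k
    have h1 : X k = (t : ℂ) * (lp.single (E := fun _ : ℕ => ℂ) 1 0 1 k)
        + ((1 - t : ℝ) : ℂ) * (lp.single (E := fun _ : ℕ => ℂ) 1 n 1 k) := by
      simp only [hXdef, lp.coeFn_add, lp.coeFn_smul, Pi.add_apply, Pi.smul_apply,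
        smul_eq_mul]
    rw [h1]
    rcases eq_or_ne k 0 with rfl | hk0
    · rw [lp.single_apply_self, lp.single_apply_ne 1 n _ (Ne.symm hn0)]
      simp
    · rcases eq_or_ne k n with rfl | hkn
      · rw [lp.single_apply_self, lp.single_apply_ne 1 0 _ hk0]
        simp [hk0]
      · rw [lp.single_apply_ne 1 0 _ hk0, lp.single_apply_ne 1 n _ hkn]
        simp [hk0, hkn]
  have hXsupp : ∀ k ∉ ({0, n} : Finset ℕ), X k = 0 := by
    intro k hk
    simp only [Finset.mem_insert, Finset.mem_singleton, not_or] at hk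
    rw [hX k, if_neg hk.1, if_neg hk.2]
  have hX0 : X 0 = (t : ℂ) := by rw [hX 0]; simp
  have hXn : X n = ((1 - t : ℝ) : ℂ) := by rw [hX n]; simp [hn0]
  have hpair : ((0 : ℕ)) ≠ n := Ne.symm hn0
  have hXnorm : ‖X‖ = 1 := by
    rw [ellOne.norm_eq]
    rw [tsum_eq_sum (s := {0, n}) (fun k hk => by rw [hXsupp k hk, norm_zero])]
    rw [Finset.sum_pair hpair, hX0, hXn]
    rw [Complex.norm_real, Complex.norm_real, Real.norm_eq_abs, Real.norm_eq_abs,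
      abs_of_nonneg ht0, abs_of_nonneg (by linarith : (0:ℝ) ≤ 1 - t)]
    ring
  have hφX : phiSum X = 1 := by
    rw [phiSum_apply]
    rw [tsum_eq_sum (s := {0, n}) hXsupp, Finset.sum_pair hpair, hX0, hXn]
    push_cast
    ring
  have haXsupp : ∀ k ∉ ({0, n} : Finset ℕ), (ellOne.a * X) k = 0 := by
    intro k hk
    rw [ellOne.mul_apply, hXsupp k hk, mul_zero]
  have hφaX : phiSum (ellOne.a * X) = ((r : ℝ) : ℂ) := by
    rw [phiSum_apply]
    rw [tsum_eq_sum (s := {0, n}) haXsupp, Finset.sum_pair hpair]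
    rw [ellOne.mul_apply, ellOne.mul_apply, a_apply, a_apply, hX0, hXn, ← hkey]
    rw [Complex.ofReal_add, Complex.ofReal_mul, Complex.ofReal_sub, Complex.ofReal_one,
      ← hαc]
    ring
  exact ⟨X, hXnorm, phiSum, norm_phiSum, hφX, hφaX⟩

end ellOneAux

theorem stmt6 :
    spatialNumericalRange ellOne.a = (Complex.ofReal '' Set.Ioc (0 : ℝ) 1) ∧
      ¬ IsClosed (spatialNumericalRange ellOne.a) := by
  have h : spatialNumericalRange ellOne.a = Complex.ofReal '' Set.Ioc (0 : ℝ) 1 :=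
    Set.Subset.antisymm ellOneAux.forward ellOneAux.backward
  refine ⟨h, ?_⟩
  rw [h]
  intro hcl
  have htend : Filter.Tendsto (fun k : ℕ => ((1 / ((k : ℝ) + 1) : ℝ) : ℂ))
      Filter.atTop (nhds 0) := by
    have h1 : Filter.Tendsto (fun k : ℕ => 1 / ((k : ℝ) + 1)) Filter.atTop (nhds 0) :=
      tendsto_one_div_add_atTop_nhds_zero_nat
    have h2 := (Complex.continuous_ofReal.tendsto 0).comp h1
    rw [Complex.ofReal_zero] at h2
    exact h2
  have hmem : (0 : ℂ) ∈ Complex.ofReal '' Set.Ioc (0 : ℝ) 1 := by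
    refine hcl.mem_of_tendsto htend (Filter.Eventually.of_forall fun k => ?_)
    refine ⟨1 / ((k : ℝ) + 1), ⟨by positivity, ?_⟩, rfl⟩
    rw [div_le_one (by positivity)]
    simp [Nat.cast_nonneg]
  obtain ⟨s, hs, hs0⟩ := hmem
  rw [Complex.ofReal_eq_zero] at hs0
  rw [hs0] at hs
  exact lt_irrefl _ hs.1
end

section
/- Let A be a finite-dimensional complex normed algebra and let a ∈ A. Then the spatial numerical range V_A(a) is a compact subset of ℂ. -/
/-- Pairs `(x, φ)` with `‖x‖ = 1` and `φ ∈ D(x)`. -/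
def normingPairs (𝕜 E : Type*) [NontriviallyNormedField 𝕜] [NormedAddCommGroup E]
    [NormedSpace 𝕜 E] : Set (E × (E →L[𝕜] 𝕜)) :=
  {p | ‖p.1‖ = 1 ∧ ‖p.2‖ = 1 ∧ p.2 p.1 = 1}

section NormingPairs

variable {𝕜 E : Type*} [NontriviallyNormedField 𝕜] [NormedAddCommGroup E] [NormedSpace 𝕜 E]

theorem isClosed_normingPairs : IsClosed (normingPairs 𝕜 E) :=
  (isClosed_eq continuous_fst.norm continuous_const).inter <|
    (isClosed_eq continuous_snd.norm continuous_const).inter <|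
      isClosed_eq (by fun_prop) continuous_const

theorem normingPairs_subset_sphere_prod_sphere :
    normingPairs 𝕜 E ⊆ Metric.sphere 0 1 ×ˢ Metric.sphere 0 1 := by
  rintro ⟨x, φ⟩ ⟨hx, hφ, -⟩
  exact ⟨mem_sphere_zero_iff_norm.2 hx, mem_sphere_zero_iff_norm.2 hφ⟩

theorem isCompact_normingPairs [ProperSpace 𝕜] [FiniteDimensional 𝕜 E] :
    IsCompact (normingPairs 𝕜 E) := by
  have : ProperSpace E := FiniteDimensional.proper 𝕜 E
  have : ProperSpace (E →L[𝕜] 𝕜) := FiniteDimensional.proper 𝕜 _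
  exact ((isCompact_sphere 0 1).prod (isCompact_sphere 0 1)).of_isClosed_subset
    isClosed_normingPairs normingPairs_subset_sphere_prod_sphere

end NormingPairs

theorem spatialNumericalRange_eq_image {A : Type*} [NonUnitalNormedRing A] [NormedSpace ℂ A]
    (a : A) : spatialNumericalRange a =
      (fun p : A × (A →L[ℂ] ℂ) => p.2 (a * p.1)) '' normingPairs ℂ A := by
  ext z
  constructor
  · rintro ⟨x, hx, φ, hφ, hφx, rfl⟩
    exact ⟨(x, φ), ⟨hx, hφ, hφx⟩, rfl⟩
  · rintro ⟨⟨x, φ⟩, ⟨hx, hφ, hφx⟩, rfl⟩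
    exact ⟨x, hx, φ, hφ, hφx, rfl⟩

theorem stmt7 {A : Type*} [NonUnitalNormedRing A] [NormedSpace ℂ A]
    [FiniteDimensional ℂ A] (a : A) :
    IsCompact (spatialNumericalRange a) := by
  rw [spatialNumericalRange_eq_image]
  exact isCompact_normingPairs.image (by fun_prop)
end

section
/- Let A be a complex normed algebra that is faithful and has no identity element, and let a ∈ A. Then the closed convex hull of the spatial numerical range V_A(a) equals {F(L_a) : F a continuous linear functional on the Banach space B(A) of bounded linear operators on A with ‖F‖ = 1 and F(id_A) = 1}, where L_a ∈ B(A) is left multiplication by a. -/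
set_option maxHeartbeats 1000000


open ContinuousLinearMap Metric in
/-- Key lemma: for any state `F` on `B(A)`, `Re F(L_b)` is approximated from above by
real parts of elements of the spatial numerical range of `b`. -/
lemma key_re {A : Type*} [NonUnitalNormedRing A] [NormedSpace ℂ A]
    [SMulCommClass ℂ A A] [IsScalarTower ℂ A A]
    (b : A) (F : (A →L[ℂ] A) →L[ℂ] ℂ) (hF : ‖F‖ = 1)
    (hFid : F (ContinuousLinearMap.id ℂ A) = 1)
    {ε : ℝ} (hε : 0 < ε) :
    ∃ w ∈ spatialNumericalRange b,
      (F (ContinuousLinearMap.mul ℂ A b)).re ≤ w.re + ε := by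
  set T := ContinuousLinearMap.mul ℂ A b with hTdef
  clear_value T
  set M := ‖T‖ with hMdef
  clear_value M
  have hM0 : 0 ≤ M := hMdef ▸ norm_nonneg _
  set α : ℝ := min (ε/(16*(M^2+1))) (1/(4*(M+1))) with hαdef
  clear_value α
  have hden1 : (0:ℝ) < 16*(M^2+1) := by nlinarith
  have hden2 : (0:ℝ) < 4*(M+1) := by nlinarith
  have hα0 : 0 < α := by rw [hαdef]; exact lt_min (div_pos hε hden1) (div_pos one_pos hden2)
  have hα1 : α ≤ ε/(16*(M^2+1)) := by rw [hαdef]; exact min_le_left _ _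
  have hα2 : α ≤ 1/(4*(M+1)) := by rw [hαdef]; exact min_le_right _ _
  have hαM : α * M ≤ 1/4 := by
    have h := mul_le_mul_of_nonneg_right hα2 hM0
    rw [div_mul_eq_mul_div, one_mul] at h
    have : M / (4*(M+1)) ≤ 1/4 := by
      rw [div_le_div_iff₀ hden2 (by norm_num)]; nlinarith
    linarith
  have h4αM2 : 4*α*M^2 ≤ ε/2 := by
    have h := mul_le_mul_of_nonneg_right hα1 (by positivity : (0:ℝ) ≤ 4*M^2)
    have h2 : ε/(16*(M^2+1)) * (4*M^2) ≤ ε/4 := by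
      rw [div_mul_eq_mul_div, div_le_div_iff₀ hden1 (by norm_num)]
      nlinarith
    nlinarith
  set S : A →L[ℂ] A := ContinuousLinearMap.id ℂ A + (α : ℂ) • T with hSdef
  clear_value S
  have hFS : F S = 1 + (α:ℂ) * F T := by
    rw [hSdef, map_add, map_smul, hFid, smul_eq_mul]
  have hFTabs : |(F T).re| ≤ M := by
    calc |(F T).re| ≤ ‖F T‖ := Complex.abs_re_le_norm _
    _ = ‖F T‖ := rfl
    _ ≤ ‖F‖ * ‖T‖ := F.le_opNorm T
    _ = M := by rw [hF, one_mul]; exact hMdef.symm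
  have hSnorm_lb : 1 + α * (F T).re ≤ ‖S‖ := by
    have h1 : (F S).re = 1 + α * (F T).re := by
      rw [hFS]; simp [Complex.add_re, Complex.mul_re]
    calc 1 + α * (F T).re = (F S).re := h1.symm
    _ ≤ ‖F S‖ := Complex.re_le_norm _
    _ = ‖F S‖ := rfl
    _ ≤ ‖F‖ * ‖S‖ := F.le_opNorm S
    _ = ‖S‖ := by rw [hF, one_mul]
  have hS_lb : (1:ℝ)/2 ≤ ‖S‖ := by nlinarith [abs_le.mp hFTabs]
  set δ : ℝ := min (α*ε/2) (1/4) with hδdef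
  clear_value δ
  have hδ0 : 0 < δ := by rw [hδdef]; exact lt_min (by positivity) (by norm_num)
  have hδ1 : δ ≤ α*ε/2 := by rw [hδdef]; exact min_le_left _ _
  have hδ2 : δ ≤ 1/4 := by rw [hδdef]; exact min_le_right _ _
  have hr : ‖S‖ - δ < ‖S‖ := by linarith
  obtain ⟨x₀, hx₀1, hx₀⟩ := S.exists_lt_apply_of_lt_opNorm hr
  have hx₀pos : 0 < ‖S x₀‖ := lt_of_le_of_lt (by linarith) hx₀
  have hx₀0 : x₀ ≠ 0 := by
    intro h; rw [h, map_zero, norm_zero] at hx₀pos; exact lt_irrefl _ hx₀pos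
  have hnx₀ : 0 < ‖x₀‖ := norm_pos_iff.mpr hx₀0
  set x : A := ((‖x₀‖ : ℂ))⁻¹ • x₀ with hxdef
  clear_value x
  have hx : ‖x‖ = 1 := by
    rw [hxdef, norm_smul, norm_inv, Complex.norm_real, Real.norm_eq_abs,
      abs_of_pos hnx₀, inv_mul_cancel₀ (ne_of_gt hnx₀)]
  have hSx_lb : ‖S‖ - δ < ‖S x‖ := by
    have : ‖S x‖ = ‖x₀‖⁻¹ * ‖S x₀‖ := by
      rw [hxdef, map_smul, norm_smul, norm_inv, Complex.norm_real, Real.norm_eq_abs,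
        abs_of_pos hnx₀]
    have hinv : 1 ≤ ‖x₀‖⁻¹ := by
      rw [le_inv_comm₀ one_pos hnx₀]; simpa using le_of_lt hx₀1
    calc ‖S‖ - δ < ‖S x₀‖ := hx₀
    _ ≤ ‖x₀‖⁻¹ * ‖S x₀‖ := le_mul_of_one_le_left (norm_nonneg _) hinv
    _ = ‖S x‖ := this.symm
  set N : ℝ := ‖S x‖ with hNdef
  clear_value N
  have hSx_eq : S x = x + (α:ℂ) • T x := by simp [hSdef]
  have hN_near : |1 - N| ≤ α * M := by
    have h1 : |‖x‖ - ‖S x‖| ≤ ‖x - S x‖ := abs_norm_sub_norm_le _ _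
    have h2 : x - S x = -((α:ℂ) • T x) := by rw [hSx_eq]; abel
    have h3 : ‖x - S x‖ = α * ‖T x‖ := by
      rw [h2, norm_neg, norm_smul, Complex.norm_real, Real.norm_eq_abs, abs_of_pos hα0]
    have h4 : ‖T x‖ ≤ M := by
      calc ‖T x‖ ≤ ‖T‖ * ‖x‖ := T.le_opNorm x
      _ = M := by rw [hx, mul_one]; exact hMdef.symm
    rw [hx, ← hNdef] at h1
    calc |1 - N| ≤ α * ‖T x‖ := by rw [← h3]; exact h1
    _ ≤ α * M := by nlinarith
  have hN_lb : (1:ℝ)/2 ≤ N := by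
    have := abs_le.mp hN_near; linarith
  have hN0 : (0:ℝ) < N := by linarith
  have hNC0 : (N : ℂ) ≠ 0 := by
    simpa using ne_of_gt hN0
  set u : A := ((N : ℂ))⁻¹ • S x with hudef
  clear_value u
  have hu : ‖u‖ = 1 := by
    rw [hudef, norm_smul, norm_inv, Complex.norm_real, Real.norm_eq_abs, abs_of_pos hN0,
      ← hNdef, inv_mul_cancel₀ (ne_of_gt hN0)]
  have hu0 : u ≠ 0 := by
    intro h; rw [h, norm_zero] at hu; norm_num at hu
  obtain ⟨f, hf1, hfu⟩ := exists_dual_vector ℂ u (norm_ne_zero_iff.mpr hu0)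
  rw [hu] at hfu; push_cast at hfu
  have hNu : (N : ℂ) • u = S x := by
    rw [hudef, smul_inv_smul₀ hNC0]
  have hfSx : f (S x) = (N : ℂ) := by
    rw [← hNu, map_smul, hfu, smul_eq_mul, mul_one]
  have hfx_re : (f x).re ≤ 1 := by
    calc (f x).re ≤ ‖f x‖ := Complex.re_le_norm _
    _ = ‖f x‖ := rfl
    _ ≤ ‖f‖ * ‖x‖ := f.le_opNorm x
    _ = 1 := by rw [hf1, hx, mul_one]
  have hfTx : α * (f (T x)).re = N - (f x).re := by
    have h1 : f (S x) = f x + (α:ℂ) * f (T x) := by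
      rw [hSx_eq, map_add]
      congr 1
      rw [map_smul, smul_eq_mul]
    rw [hfSx] at h1
    have := congrArg Complex.re h1
    simp [Complex.add_re, Complex.mul_re] at this
    linarith
  -- distance between u and x
  have hux : (N : ℂ) • (u - x) = ((1:ℂ) - (N:ℂ)) • x + (α:ℂ) • T x := by
    rw [smul_sub, hNu, hSx_eq, sub_smul, one_smul]; abel
  have hux_norm : ‖u - x‖ ≤ 4 * (α * M) := by
    have h1 : N * ‖u - x‖ = ‖(N:ℂ) • (u - x)‖ := by
      rw [norm_smul, Complex.norm_real, Real.norm_eq_abs, abs_of_pos hN0]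
    have h2 : ‖(N:ℂ) • (u - x)‖ ≤ |1 - N| + α * M := by
      rw [hux]
      calc ‖((1:ℂ) - (N:ℂ)) • x + (α:ℂ) • T x‖
          ≤ ‖((1:ℂ) - (N:ℂ)) • x‖ + ‖(α:ℂ) • T x‖ := norm_add_le _ _
      _ ≤ |1 - N| + α * M := by
          have e1 : ‖((1:ℂ) - (N:ℂ)) • x‖ = |1 - N| := by
            rw [norm_smul, hx, mul_one]
            rw [show (1:ℂ) - (N:ℂ) = ((1 - N : ℝ) : ℂ) by push_cast; ring]
            rw [Complex.norm_real, Real.norm_eq_abs]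
          have e2 : ‖(α:ℂ) • T x‖ ≤ α * M := by
            rw [norm_smul, Complex.norm_real, Real.norm_eq_abs, abs_of_pos hα0]
            have : ‖T x‖ ≤ M := by
              calc ‖T x‖ ≤ ‖T‖ * ‖x‖ := T.le_opNorm x
              _ = M := by rw [hx, mul_one]; exact hMdef.symm
            nlinarith
          linarith
    have h3 : N * ‖u - x‖ ≤ 2 * (α * M) := by
      rw [h1]; calc ‖(N:ℂ) • (u - x)‖ ≤ |1 - N| + α * M := h2
      _ ≤ 2 * (α * M) := by linarith [hN_near]
    nlinarith [norm_nonneg (u - x)]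
  have hTux : (f (T x)).re ≤ (f (T u)).re + 4 * α * M^2 := by
    have h1 : ‖f (T x) - f (T u)‖ ≤ M * (4 * (α * M)) := by
      calc ‖f (T x) - f (T u)‖ = ‖f (T (x - u))‖ := by rw [map_sub T, map_sub]
      _ ≤ ‖f‖ * ‖T (x - u)‖ := f.le_opNorm _
      _ = ‖T (x - u)‖ := by rw [hf1, one_mul]
      _ ≤ ‖T‖ * ‖x - u‖ := T.le_opNorm _
      _ ≤ M * (4 * (α * M)) := by
          rw [← hMdef]
          have : ‖x - u‖ = ‖u - x‖ := by rw [norm_sub_rev]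
          rw [this]; nlinarith
    have h2 : (f (T x) - f (T u)).re ≤ M * (4 * (α * M)) := by
      calc (f (T x) - f (T u)).re ≤ ‖f (T x) - f (T u)‖ := Complex.re_le_norm _
      _ = ‖f (T x) - f (T u)‖ := rfl
      _ ≤ M * (4 * (α * M)) := h1
    rw [Complex.sub_re] at h2; nlinarith
  refine ⟨f (b * u), ⟨u, hu, f, hf1, hfu, rfl⟩, ?_⟩
  have hbu : T u = b * u := by rw [hTdef]; exact ContinuousLinearMap.mul_apply' ℂ A b u
  rw [← hbu]
  -- final chain, multiplied by α
  have hchain : α * (F T).re ≤ α * (f (T u)).re + α * ε := by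
    have c1 : α * (F T).re ≤ ‖S‖ - 1 := by linarith [hSnorm_lb]
    have c2 : ‖S‖ - 1 < N - 1 + δ := by linarith [hSx_lb]
    have c3 : N - 1 ≤ α * (f (T x)).re := by linarith [hfTx, hfx_re]
    have c4 : α * (f (T x)).re ≤ α * (f (T u)).re + 4 * α^2 * M^2 := by
      have h := mul_le_mul_of_nonneg_left hTux hα0.le
      nlinarith [h]
    have c5 : 4 * α^2 * M^2 ≤ α * (ε/2) := by
      have h := mul_le_mul_of_nonneg_left h4αM2 hα0.le
      nlinarith [h]
    have c6 : δ ≤ α * (ε/2) := by linarith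
    linarith
  have hchain' : α * (F T).re ≤ α * ((f (T u)).re + ε) := by rw [mul_add]; linarith [hchain]
  exact le_of_mul_le_mul_left hchain' hα0


open ContinuousLinearMap Metric in
theorem stmt10 {A : Type*} [NonUnitalNormedRing A] [NormedSpace ℂ A]
    [SMulCommClass ℂ A A] [IsScalarTower ℂ A A]
    (hfaithful : ∀ b : A, (∀ x : A, b * x = 0) → b = 0)
    (hnoid : ¬ ∃ e : A, ∀ x : A, e * x = x ∧ x * e = x)
    (a : A) :
    closure (convexHull ℝ (spatialNumericalRange a)) =
      {z : ℂ | ∃ F : (A →L[ℂ] A) →L[ℂ] ℂ, ‖F‖ = 1 ∧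
        F (ContinuousLinearMap.id ℂ A) = 1 ∧
        F (ContinuousLinearMap.mul ℂ A a) = z} := by
  set S : Set ℂ := {z : ℂ | ∃ F : (A →L[ℂ] A) →L[ℂ] ℂ, ‖F‖ = 1 ∧
        F (ContinuousLinearMap.id ℂ A) = 1 ∧
        F (ContinuousLinearMap.mul ℂ A a) = z} with hSdef
  have hnorm1 : ∀ F : (A →L[ℂ] A) →L[ℂ] ℂ, F (ContinuousLinearMap.id ℂ A) = 1 →
      1 ≤ ‖F‖ := by
    intro F hFid
    have h1 : ‖F (ContinuousLinearMap.id ℂ A)‖ ≤ ‖F‖ * ‖ContinuousLinearMap.id ℂ A‖ :=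
      F.le_opNorm _
    have h2 : ‖ContinuousLinearMap.id ℂ A‖ ≤ 1 := norm_id_le
    have h3 : ‖F (ContinuousLinearMap.id ℂ A)‖ = 1 := by rw [hFid]; simp
    have h4 : (0:ℝ) ≤ ‖F‖ := by exact norm_nonneg F
    nlinarith
  apply Set.Subset.antisymm
  · -- closure of convex hull ⊆ S
    have hsub : spatialNumericalRange a ⊆ S := by
      rintro z ⟨x, hx, φ, hφ, hφx, hφz⟩
      have happly : ‖(ContinuousLinearMap.apply ℂ A x : (A →L[ℂ] A) →L[ℂ] A)‖ ≤ 1 := by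
        refine opNorm_le_bound _ zero_le_one fun G => ?_
        have : ‖G x‖ ≤ ‖G‖ * ‖x‖ := G.le_opNorm x
        simpa [hx] using this
      refine ⟨φ.comp (ContinuousLinearMap.apply ℂ A x), ?_, ?_, ?_⟩
      · refine le_antisymm ?_ (hnorm1 _ (by simpa using hφx))
        calc ‖φ.comp (ContinuousLinearMap.apply ℂ A x)‖
            ≤ ‖φ‖ * ‖(ContinuousLinearMap.apply ℂ A x : (A →L[ℂ] A) →L[ℂ] A)‖ :=
              opNorm_comp_le _ _
        _ ≤ 1 := by rw [hφ, one_mul]; exact happly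
      · simpa using hφx
      · simpa using hφz
    have hconv : Convex ℝ S := by
      rintro z₁ ⟨F₁, hF₁, hI₁, hT₁⟩ z₂ ⟨F₂, hF₂, hI₂, hT₂⟩ p q hp hq hpq
      refine ⟨(p:ℂ) • F₁ + (q:ℂ) • F₂, ?_, ?_, ?_⟩
      · have hid : ((p:ℂ) • F₁ + (q:ℂ) • F₂) (ContinuousLinearMap.id ℂ A) = 1 := by
          rw [ContinuousLinearMap.add_apply, ContinuousLinearMap.smul_apply,
            ContinuousLinearMap.smul_apply, hI₁, hI₂, smul_eq_mul, smul_eq_mul,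
            mul_one, mul_one, ← Complex.ofReal_add, hpq, Complex.ofReal_one]
        refine le_antisymm ?_ (hnorm1 _ hid)
        have e1 : ‖(p:ℂ) • F₁‖ ≤ p := by
          refine le_trans (ContinuousLinearMap.opNorm_smul_le _ _) ?_
          rw [hF₁, mul_one, Complex.norm_real, Real.norm_eq_abs, abs_of_nonneg hp]
        have e2 : ‖(q:ℂ) • F₂‖ ≤ q := by
          refine le_trans (ContinuousLinearMap.opNorm_smul_le _ _) ?_
          rw [hF₂, mul_one, Complex.norm_real, Real.norm_eq_abs, abs_of_nonneg hq]
        have e3 : ‖(p:ℂ) • F₁ + (q:ℂ) • F₂‖ ≤ ‖(p:ℂ) • F₁‖ + ‖(q:ℂ) • F₂‖ := by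
          exact norm_add_le ((p:ℂ) • F₁) ((q:ℂ) • F₂)
        linarith
      · rw [ContinuousLinearMap.add_apply, ContinuousLinearMap.smul_apply,
          ContinuousLinearMap.smul_apply, hI₁, hI₂, smul_eq_mul, smul_eq_mul,
          mul_one, mul_one, ← Complex.ofReal_add, hpq, Complex.ofReal_one]
      · rw [ContinuousLinearMap.add_apply, ContinuousLinearMap.smul_apply,
          ContinuousLinearMap.smul_apply, hT₁, hT₂, smul_eq_mul, smul_eq_mul,
          Complex.real_smul, Complex.real_smul]
    have hclosed : IsClosed S := by
      have hcomp : IsCompact ((fun G : WeakDual ℂ (A →L[ℂ] A) =>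
          G (ContinuousLinearMap.mul ℂ A a)) ''
          ((WeakDual.toStrongDual ⁻¹' closedBall (0 : StrongDual ℂ (A →L[ℂ] A)) 1) ∩
            {G : WeakDual ℂ (A →L[ℂ] A) | G (ContinuousLinearMap.id ℂ A) = 1})) := by
        refine IsCompact.image ?_ (WeakDual.eval_continuous _)
        exact (WeakDual.isCompact_closedBall (𝕜 := ℂ) (E := A →L[ℂ] A) 0 1).inter_right
          (isClosed_eq (WeakDual.eval_continuous _) continuous_const)
      have heq : S = (fun G : WeakDual ℂ (A →L[ℂ] A) =>
          G (ContinuousLinearMap.mul ℂ A a)) ''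
          ((WeakDual.toStrongDual ⁻¹' closedBall (0 : StrongDual ℂ (A →L[ℂ] A)) 1) ∩
            {G : WeakDual ℂ (A →L[ℂ] A) | G (ContinuousLinearMap.id ℂ A) = 1}) := by
        ext z
        constructor
        · rintro ⟨F, h1, h2, h3⟩
          exact ⟨StrongDual.toWeakDual F,
            ⟨by exact (dist_zero_right (F : StrongDual ℂ (A →L[ℂ] A))).le.trans h1.le, h2⟩, h3⟩
        · rintro ⟨G, ⟨hG1, hG2⟩, rfl⟩
          refine ⟨WeakDual.toStrongDual G, ?_, hG2, rfl⟩
          have hle : ‖WeakDual.toStrongDual G‖ ≤ 1 := by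
            exact (dist_zero_right (WeakDual.toStrongDual G)).ge.trans (mem_closedBall.mp hG1)
          exact le_antisymm hle (hnorm1 _ hG2)
      rw [heq]
      exact hcomp.isClosed
    exact closure_minimal (convexHull_min hsub hconv) hclosed
  · -- S ⊆ closure of convex hull
    rintro z ⟨F, hF, hFid, hFT⟩
    by_contra hzn
    obtain ⟨f, s, hfs, hsz⟩ := RCLike.geometric_hahn_banach_closed_point (𝕜 := ℂ)
      ((convex_convexHull ℝ _).closure) isClosed_closure hzn
    simp only [RCLike.re_to_complex] at hfs hsz
    have hfc : ∀ w : ℂ, f w = f 1 * w := by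
      intro w
      conv_lhs => rw [show w = w • (1:ℂ) by simp, map_smul]
      rw [smul_eq_mul, mul_comm]
    have hε : 0 < (f z).re - s := by linarith
    obtain ⟨w, hw, hle⟩ := key_re (f 1 • a) F hF hFid hε
    have h1 : F (ContinuousLinearMap.mul ℂ A (f 1 • a)) = f 1 * z := by
      rw [show ContinuousLinearMap.mul ℂ A (f 1 • a) =
        f 1 • ContinuousLinearMap.mul ℂ A a from map_smul _ _ _, map_smul,
        smul_eq_mul, hFT]
    obtain ⟨x, hx, φ, hφ, hφx, hφw⟩ := hw
    have hw' : φ (a * x) ∈ spatialNumericalRange a := ⟨x, hx, φ, hφ, hφx, rfl⟩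
    have hwc : w = f 1 * φ (a * x) := by
      rw [← hφw, show (f 1 • a) * x = f 1 • (a * x) from smul_mul_assoc _ a x, map_smul,
        smul_eq_mul]
    have hlt : (f (φ (a * x))).re < s :=
      hfs _ (subset_closure (subset_convexHull ℝ _ hw'))
    rw [h1, hwc] at hle
    have e1 : (f 1 * z).re = (f z).re := by rw [← hfc z]
    have e2 : (f 1 * φ (a * x)).re = (f (φ (a * x))).re := by rw [← hfc _]
    rw [e1, e2] at hle
    linarith
end

section
/- Let A be a complex normed algebra that is faithful and has no identity element, and let a ∈ A. Then the spatial numerical radius ν_A(a) = sup {|λ| : λ ∈ V_A(a)} equals sup {|F(L_a)| : F a continuous linear functional on B(A) with ‖F‖ = 1 and F(id_A) = 1}, where L_a ∈ B(A) is left multiplication by a. -/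
/-- The spatial numerical radius `ν_A(a) = sup {|λ| : λ ∈ V_A(a)}`. -/
noncomputable def spatialNumericalRadius {A : Type*} [NonUnitalNormedRing A] [NormedSpace ℂ A]
    (a : A) : ℝ :=
  sSup ((fun z : ℂ => ‖z‖) '' spatialNumericalRange a)

set_option maxHeartbeats 1000000

lemma aux_key {A : Type*} [NonUnitalNormedRing A] [NormedSpace ℂ A]
    [SMulCommClass ℂ A A] [IsScalarTower ℂ A A] (a : A)
    (hbdd : BddAbove ((fun z : ℂ => ‖z‖) '' spatialNumericalRange a))
    (hν0 : 0 ≤ sSup ((fun z : ℂ => ‖z‖) '' spatialNumericalRange a))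
    (F : (A →L[ℂ] A) →L[ℂ] ℂ) (hF : ‖F‖ = 1)
    (hFid : F (ContinuousLinearMap.id ℂ A) = 1) :
    ‖F (ContinuousLinearMap.mul ℂ A a)‖ ≤ sSup ((fun z : ℂ => ‖z‖) '' spatialNumericalRange a) := by
  set ν := sSup ((fun z : ℂ => ‖z‖) '' spatialNumericalRange a) with hνdef
  set z := F (ContinuousLinearMap.mul ℂ A a) with hzdef
  set ρ := ‖z‖ with hρdef
  refine le_of_forall_pos_le_add fun ε hε => ?_
  rcases le_or_gt ρ ε with h | hρε
  · linarith
  -- now ρ > ε > 0, so z ≠ 0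
  have hρpos : 0 < ρ := lt_trans hε hρε
  have hz0 : z ≠ 0 := by
    intro h; rw [h] at hρdef; simp [hρdef] at hρpos
  set K := ‖a‖ with hKdef
  have hK0 : 0 ≤ K := norm_nonneg a
  have hρK : ρ ≤ K := by
    calc ρ = ‖F (ContinuousLinearMap.mul ℂ A a)‖ := rfl
    _ ≤ ‖F‖ * ‖ContinuousLinearMap.mul ℂ A a‖ := F.le_opNorm _
    _ ≤ 1 * ‖a‖ := by
        rw [hF]; gcongr; exact ContinuousLinearMap.opNorm_mul_apply_le ℂ A a
    _ = K := one_mul _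
  set t : ℝ := ε / (4 * K ^ 2 + 1) with htdef
  have ht : 0 < t := by positivity
  set c : ℂ := (starRingEnd ℂ) z / (ρ : ℂ) with hcdef
  have hρC : (ρ : ℂ) ≠ 0 := by exact_mod_cast hρpos.ne'
  have hcz : c * z = (ρ : ℂ) := by
    rw [hcdef, div_mul_eq_mul_div, mul_comm, Complex.mul_conj]
    rw [Complex.normSq_eq_norm_sq, ← hρdef]
    push_cast
    field_simp
  have hcabs : ‖c‖ = 1 := by
    rw [hcdef, norm_div, Complex.norm_conj, ← hρdef, Complex.norm_real, Real.norm_eq_abs,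
      abs_of_pos hρpos, div_self hρpos.ne']
  set b : A := c • a with hbdef
  have hbK : ‖b‖ = K := by
    rw [hbdef, norm_smul, hcabs, one_mul]
  set Lb := ContinuousLinearMap.mul ℂ A b with hLbdef
  have hFLb : F Lb = (ρ : ℂ) := by
    rw [hLbdef, hbdef, map_smul, map_smul, smul_eq_mul, ← hzdef, hcz]
  -- find a good unit vector x
  have hx : ∃ x : A, ‖x‖ = 1 ∧ 1 + t * (ρ - ε / 2) < ‖x + (t : ℂ) • (b * x)‖ := by
    by_contra hcon
    push_neg at hcon
    set T := ContinuousLinearMap.id ℂ A + (t : ℂ) • Lb with hTdef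
    have hTx : ∀ x : A, T x = x + (t : ℂ) • (b * x) := by
      intro x; simp [hTdef, hLbdef]
    have hM0 : (0:ℝ) ≤ 1 + t * (ρ - ε / 2) := by nlinarith
    have hT : ‖T‖ ≤ 1 + t * (ρ - ε / 2) := by
      refine ContinuousLinearMap.opNorm_le_bound T hM0 fun x => ?_
      rcases eq_or_ne x 0 with rfl | hx0
      · simp
      · have hn : (0:ℝ) < ‖x‖ := norm_pos_iff.mpr hx0
        have hunit : ‖(‖x‖ : ℂ)⁻¹ • x‖ = 1 := by
          rw [norm_smul, norm_inv, Complex.norm_real, Real.norm_eq_abs,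
            abs_of_pos hn, inv_mul_cancel₀ hn.ne']
        have := hcon _ hunit
        have hrw : (‖x‖ : ℂ)⁻¹ • x + (t : ℂ) • (b * ((‖x‖ : ℂ)⁻¹ • x))
            = (‖x‖ : ℂ)⁻¹ • (x + (t : ℂ) • (b * x)) := by
          rw [mul_smul_comm, smul_add, smul_comm ((t:ℂ)) ((‖x‖ : ℂ)⁻¹)]
        rw [hrw, norm_smul, norm_inv, Complex.norm_real, Real.norm_eq_abs,
          abs_of_pos hn] at this
        rw [hTx]
        calc ‖x + (t : ℂ) • (b * x)‖
            = ‖x‖ * (‖x‖⁻¹ * ‖x + (t : ℂ) • (b * x)‖) := by field_simp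
        _ ≤ ‖x‖ * (1 + t * (ρ - ε / 2)) := by
            exact mul_le_mul_of_nonneg_left this hn.le
        _ = (1 + t * (ρ - ε / 2)) * ‖x‖ := mul_comm _ _
    have hFT : F T = 1 + (t : ℂ) * (ρ : ℂ) := by
      rw [hTdef, map_add, hFid, map_smul, hFLb, smul_eq_mul]
    have h1 : (1 : ℝ) + t * ρ ≤ 1 + t * (ρ - ε / 2) := by
      calc (1:ℝ) + t * ρ = ‖F T‖ := by
            rw [hFT]
            rw [show (1 : ℂ) + (t:ℂ) * (ρ:ℂ) = ((1 + t * ρ : ℝ) : ℂ) by push_cast; ring]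
            rw [Complex.norm_real, Real.norm_eq_abs, abs_of_pos (by nlinarith)]
      _ = ‖F T‖ := rfl
      _ ≤ ‖F‖ * ‖T‖ := F.le_opNorm _
      _ ≤ 1 + t * (ρ - ε / 2) := by rw [hF, one_mul]; exact hT
    nlinarith
  obtain ⟨x, hx1, hxbig⟩ := hx
  set u : A := x + (t : ℂ) • (b * x) with hudef
  set r : ℝ := ‖u‖ with hrdef
  have hr1 : 1 + t * (ρ - ε / 2) < r := hxbig
  have hrpos : (0:ℝ) < r := by nlinarith
  have hu0 : u ≠ 0 := by
    intro h
    rw [hrdef, h, norm_zero] at hrpos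
    exact lt_irrefl _ hrpos
  have hr2 : r ≤ 1 + t * K := by
    calc r ≤ ‖x‖ + ‖(t : ℂ) • (b * x)‖ := norm_add_le _ _
    _ = 1 + t * ‖b * x‖ := by
        rw [hx1, norm_smul, Complex.norm_real, Real.norm_eq_abs, abs_of_pos ht]
    _ ≤ 1 + t * (‖b‖ * ‖x‖) := by gcongr; exact norm_mul_le _ _
    _ = 1 + t * K := by rw [hbK, hx1, mul_one]
  obtain ⟨ψ, hψ1, hψu⟩ := exists_dual_vector ℂ u (norm_ne_zero_iff.mpr hu0)
  set y : A := ((r : ℂ))⁻¹ • u with hydef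
  have hrC : (r : ℂ) ≠ 0 := by exact_mod_cast hrpos.ne'
  have hy1 : ‖y‖ = 1 := by
    rw [hydef, norm_smul, norm_inv, Complex.norm_real, Real.norm_eq_abs,
      abs_of_pos hrpos, inv_mul_cancel₀ hrpos.ne']
  have hψu' : ψ u = (r : ℂ) := hψu
  have hψy : ψ y = 1 := by
    rw [hydef, map_smul, smul_eq_mul, hψu', inv_mul_cancel₀ hrC]
  set w : ℂ := ψ (a * y) with hwdef
  have hwS : w ∈ spatialNumericalRange a := ⟨y, hy1, ψ, hψ1, hψy, rfl⟩
  have hwνle : ‖w‖ ≤ ν := le_csSup hbdd (Set.mem_image_of_mem _ hwS)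
  -- ψ (b * y) = c * w
  have hby : ψ (b * y) = c * w := by
    rw [hbdef, smul_mul_assoc, map_smul, smul_eq_mul, hwdef]
  -- lower bound on Re ψ (b * y)
  have hψx_re : (ψ x).re ≤ 1 := by
    calc (ψ x).re ≤ ‖ψ x‖ := Complex.re_le_norm _
    _ = ‖ψ x‖ := rfl
    _ ≤ ‖ψ‖ * ‖x‖ := ψ.le_opNorm _
    _ = 1 := by rw [hψ1, hx1, mul_one]
  have hψu_split : (r : ℂ) = ψ x + (t : ℂ) * ψ (b * x) := by
    rw [← hψu', hudef, map_add, map_smul, smul_eq_mul]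
  have hre_bx : ρ - ε / 2 < (ψ (b * x)).re := by
    have h1 : r = (ψ x).re + t * (ψ (b * x)).re := by
      have := congrArg Complex.re hψu_split
      simpa [Complex.add_re, Complex.re_ofReal_mul, Complex.ofReal_re] using this
    have h2 : t * (ρ - ε / 2) < t * (ψ (b * x)).re := by nlinarith
    exact lt_of_mul_lt_mul_left h2 ht.le
  have hbbx : ‖ψ (b * (b * x))‖ ≤ K ^ 2 := by
    calc ‖ψ (b * (b * x))‖ = ‖ψ (b * (b * x))‖ := rfl
    _ ≤ ‖ψ‖ * ‖b * (b * x)‖ := ψ.le_opNorm _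
    _ ≤ 1 * (‖b‖ * (‖b‖ * ‖x‖)) := by
        rw [hψ1]
        gcongr
        calc ‖b * (b * x)‖ ≤ ‖b‖ * ‖b * x‖ := norm_mul_le _ _
        _ ≤ ‖b‖ * (‖b‖ * ‖x‖) := by gcongr; exact norm_mul_le _ _
    _ = K ^ 2 := by rw [hbK, hx1]; ring
  have hbu_split : ψ (b * u) = ψ (b * x) + (t : ℂ) * ψ (b * (b * x)) := by
    rw [hudef, mul_add, mul_smul_comm, map_add, map_smul, smul_eq_mul]
  have hby_split : ψ (b * y) = ((r⁻¹ : ℝ) : ℂ) * ψ (b * u) := by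
    rw [hydef, mul_smul_comm, map_smul, smul_eq_mul]
    push_cast
    ring
  have hre_bu : ρ - ε / 2 - t * K ^ 2 ≤ (ψ (b * u)).re := by
    have h1 : (ψ (b * u)).re = (ψ (b * x)).re + t * (ψ (b * (b * x))).re := by
      have := congrArg Complex.re hbu_split
      simpa [Complex.add_re, Complex.re_ofReal_mul, Complex.ofReal_re] using this
    have h2 : -(K ^ 2) ≤ (ψ (b * (b * x))).re := by
      have := Complex.abs_re_le_norm (ψ (b * (b * x)))
      have h3 := hbbx
      cases' abs_le.mp this with hl hr
      linarith
    nlinarith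
  have hre_by : ρ - ε ≤ (ψ (b * y)).re := by
    have h1 : (ψ (b * y)).re = r⁻¹ * (ψ (b * u)).re := by
      have := congrArg Complex.re hby_split
      simpa [Complex.re_ofReal_mul] using this
    have harith : ρ - ε / 2 - t * K ^ 2 ≥ (ρ - ε) * r := by
      have h2 : (ρ - ε) * r ≤ (ρ - ε) * (1 + t * K) := by
        apply mul_le_mul_of_nonneg_left hr2 (by linarith)
      have hρεK : (ρ - ε) * K ≤ K ^ 2 := by nlinarith
      have h3 : t * K ^ 2 + (ρ - ε) * t * K ≤ 2 * (t * K ^ 2) := by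
        nlinarith [mul_le_mul_of_nonneg_left hρεK ht.le]
      have h5 : 4 * (t * K ^ 2) + t = ε := by
        rw [htdef]; field_simp
      have h4 : 2 * (t * K ^ 2) ≤ ε / 2 := by linarith
      nlinarith
    rw [h1]
    rw [ge_iff_le] at harith
    calc ρ - ε = r⁻¹ * ((ρ - ε) * r) := by field_simp
    _ ≤ r⁻¹ * (ρ - ε / 2 - t * K ^ 2) := by
        exact mul_le_mul_of_nonneg_left harith (inv_nonneg.mpr hrpos.le)
    _ ≤ r⁻¹ * (ψ (b * u)).re := by
        exact mul_le_mul_of_nonneg_left hre_bu (inv_nonneg.mpr hrpos.le)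
  -- conclude
  have hfinal : ρ - ε ≤ ν := by
    calc ρ - ε ≤ (ψ (b * y)).re := hre_by
    _ ≤ ‖ψ (b * y)‖ := Complex.re_le_norm _
    _ = ‖w‖ := by rw [hby, norm_mul, hcabs, one_mul]
    _ ≤ ν := hwνle
  linarith

theorem stmt11 {A : Type*} [NonUnitalNormedRing A] [NormedSpace ℂ A]
    [SMulCommClass ℂ A A] [IsScalarTower ℂ A A]
    (hfaithful : ∀ b : A, (∀ x : A, b * x = 0) → b = 0)
    (hnoid : ¬ ∃ e : A, ∀ x : A, e * x = x ∧ x * e = x)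
    (a : A) :
    spatialNumericalRadius a =
      sSup {r : ℝ | ∃ F : (A →L[ℂ] A) →L[ℂ] ℂ, ‖F‖ = 1 ∧
        F (ContinuousLinearMap.id ℂ A) = 1 ∧
        ‖F (ContinuousLinearMap.mul ℂ A a)‖ = r} := by
  rw [spatialNumericalRadius]
  have hNT : Nontrivial A := by
    by_contra h
    rw [not_nontrivial_iff_subsingleton] at h
    exact hnoid ⟨0, fun x => ⟨Subsingleton.elim _ _, Subsingleton.elim _ _⟩⟩
  set S := spatialNumericalRange a with hSdef
  set R := {r : ℝ | ∃ F : (A →L[ℂ] A) →L[ℂ] ℂ, ‖F‖ = 1 ∧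
        F (ContinuousLinearMap.id ℂ A) = 1 ∧
        ‖F (ContinuousLinearMap.mul ℂ A a)‖ = r} with hRdef
  -- bounds
  have hSbd : ∀ s ∈ (fun z : ℂ => ‖z‖) '' S, s ≤ ‖a‖ := by
    rintro s ⟨z, ⟨x, hx, φ, hφ, hφx, hz⟩, rfl⟩
    calc ‖z‖ = ‖φ (a * x)‖ := by rw [← hz]
    _ ≤ ‖φ‖ * ‖a * x‖ := φ.le_opNorm _
    _ ≤ 1 * (‖a‖ * ‖x‖) := by rw [hφ]; gcongr; exact norm_mul_le _ _
    _ = ‖a‖ := by rw [hx]; ring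
  have hbddS : BddAbove ((fun z : ℂ => ‖z‖) '' S) := ⟨‖a‖, hSbd⟩
  have hRbd : ∀ s ∈ R, s ≤ ‖a‖ := by
    rintro s ⟨F, hF, hFid, rfl⟩
    calc ‖F (ContinuousLinearMap.mul ℂ A a)‖
        = ‖F (ContinuousLinearMap.mul ℂ A a)‖ := rfl
    _ ≤ ‖F‖ * ‖ContinuousLinearMap.mul ℂ A a‖ := F.le_opNorm _
    _ ≤ 1 * ‖a‖ := by
        rw [hF]; gcongr; exact ContinuousLinearMap.opNorm_mul_apply_le ℂ A a
    _ = ‖a‖ := one_mul _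
  have hbddR : BddAbove R := ⟨‖a‖, hRbd⟩
  -- S is nonempty
  have hSne : ((fun z : ℂ => ‖z‖) '' S).Nonempty := by
    obtain ⟨v, hv⟩ := exists_ne (0 : A)
    have hnv : (0:ℝ) < ‖v‖ := norm_pos_iff.mpr hv
    set x₀ : A := ((‖v‖ : ℂ))⁻¹ • v with hx₀def
    have hx₀ : ‖x₀‖ = 1 := by
      rw [hx₀def, norm_smul, norm_inv, Complex.norm_real, Real.norm_eq_abs,
        abs_of_pos hnv, inv_mul_cancel₀ hnv.ne']
    have hx₀0 : x₀ ≠ 0 := by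
      intro h; rw [h, norm_zero] at hx₀; norm_num at hx₀
    obtain ⟨φ, hφ1, hφx⟩ := exists_dual_vector ℂ x₀ (norm_ne_zero_iff.mpr hx₀0)
    refine ⟨‖φ (a * x₀)‖, Set.mem_image_of_mem _ ?_⟩
    exact ⟨x₀, hx₀, φ, hφ1, by rw [hφx, hx₀]; norm_num, rfl⟩
  have hν0 : 0 ≤ sSup ((fun z : ℂ => ‖z‖) '' S) := by
    obtain ⟨s, hs⟩ := hSne
    have h1 : s ≤ sSup ((fun z : ℂ => ‖z‖) '' S) := le_csSup hbddS hs
    obtain ⟨z, _, rfl⟩ := hs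
    exact le_trans (norm_nonneg z) h1
  refine le_antisymm ?_ ?_
  · -- easy direction
    refine csSup_le_csSup hbddR hSne ?_
    rintro s ⟨z, ⟨x, hx, φ, hφ, hφx, hz⟩, rfl⟩
    set F : (A →L[ℂ] A) →L[ℂ] ℂ := φ.comp ((ContinuousLinearMap.apply ℂ A) x) with hFdef
    have hFap : ∀ T : A →L[ℂ] A, F T = φ (T x) := fun T => rfl
    have hFid : F (ContinuousLinearMap.id ℂ A) = 1 := by rw [hFap]; simpa using hφx
    have hFnorm : ‖F‖ = 1 := by
      refine le_antisymm ?_ ?_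
      · refine ContinuousLinearMap.opNorm_le_bound F zero_le_one fun T => ?_
        calc ‖F T‖ = ‖φ (T x)‖ := by rw [hFap]
        _ ≤ ‖φ‖ * ‖T x‖ := φ.le_opNorm _
        _ ≤ 1 * (‖T‖ * ‖x‖) := by rw [hφ]; gcongr; exact T.le_opNorm _
        _ = 1 * ‖T‖ := by rw [hx, mul_one]
      · have h1 : ‖F (ContinuousLinearMap.id ℂ A)‖ = 1 := by rw [hFid]; simp
        have h2 := F.le_opNorm (ContinuousLinearMap.id ℂ A)
        rw [h1, ContinuousLinearMap.norm_id] at h2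
        linarith [h2]
    exact ⟨F, hFnorm, hFid, by rw [hFap]; simp [hz]⟩
  · -- hard direction
    refine Real.sSup_le ?_ hν0
    rintro s ⟨F, hF, hFid, rfl⟩
    exact aux_key a hbddS hν0 F hF hFid
end

section
/- Let A be a complex normed algebra that is faithful and has no identity element, and let a ∈ A. Then (1/e)·‖L_a‖ ≤ ν_A(a) ≤ ‖L_a‖, where ‖L_a‖ is the operator norm of left multiplication by a and e is Euler's number. -/
section auxiliary
set_option linter.unusedSectionVars false
variable {A : Type*} [NonUnitalNormedRing A] [NormedSpace ℂ A]
    [SMulCommClass ℂ A A] [IsScalarTower ℂ A A] (a : A)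

lemma abs_mem_le_opNorm' {t : ℝ} (ht : t ∈ (fun z : ℂ => ‖z‖) '' spatialNumericalRange a) :
    t ≤ ‖ContinuousLinearMap.mul ℂ A a‖ := by
  obtain ⟨z, ⟨x, hx, φ, hφ, hφx, hz⟩, rfl⟩ := ht
  have h1 : ‖φ (a * x)‖ ≤ ‖φ‖ * ‖a * x‖ := φ.le_opNorm _
  have h2 : ‖a * x‖ ≤ ‖ContinuousLinearMap.mul ℂ A a‖ * ‖x‖ :=
    (ContinuousLinearMap.mul ℂ A a).le_opNorm x
  rw [hz] at h1
  rw [hx] at h2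
  rw [hφ, one_mul] at h1
  linarith

lemma snr_bddAbove' : BddAbove ((fun z : ℂ => ‖z‖) '' spatialNumericalRange a) :=
  ⟨‖ContinuousLinearMap.mul ℂ A a‖, fun _ ht => abs_mem_le_opNorm' a ht⟩

lemma snr_nonneg' : 0 ≤ spatialNumericalRadius a :=
  Real.sSup_nonneg (by rintro t ⟨z, -, rfl⟩; exact norm_nonneg z)

lemma snr_le_opNorm' : spatialNumericalRadius a ≤ ‖ContinuousLinearMap.mul ℂ A a‖ :=
  Real.sSup_le (fun _ ht => abs_mem_le_opNorm' a ht) (norm_nonneg _)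

lemma abs_le_snr' {x : A} (hx : ‖x‖ = 1) {φ : A →L[ℂ] ℂ} (hφ : ‖φ‖ = 1) (hφx : φ x = 1) :
    ‖φ (a * x)‖ ≤ spatialNumericalRadius a :=
  le_csSup (snr_bddAbove' a) ⟨φ (a * x), ⟨x, hx, φ, hφ, hφx, rfl⟩, rfl⟩

/-- Key pointwise estimate: almost-states along perturbed directions can be renormalized into
exact states because the perturbed vector is itself a legitimate base point. -/
lemma key_est' {x : A} (hx : ‖x‖ = 1) (μ : ℂ) :
    ‖x + μ • (a * x)‖ ≤ 1 + ‖μ‖ * spatialNumericalRadius a +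
      ‖μ‖ ^ 2 * (‖ContinuousLinearMap.mul ℂ A a‖ * spatialNumericalRadius a
        + ‖ContinuousLinearMap.mul ℂ A a‖ ^ 2) := by
  set ν := spatialNumericalRadius a with hν
  set N := ‖ContinuousLinearMap.mul ℂ A a‖ with hN
  have hν0 : 0 ≤ ν := snr_nonneg' a
  have hN0 : 0 ≤ N := norm_nonneg _
  have hμ0 : 0 ≤ ‖μ‖ := norm_nonneg μ
  set z := x + μ • (a * x) with hzdef
  have hax : ‖a * x‖ ≤ N := by
    have := (ContinuousLinearMap.mul ℂ A a).le_opNorm x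
    simpa [hx] using this
  have haax : ‖a * (a * x)‖ ≤ N ^ 2 := by
    have h := (ContinuousLinearMap.mul ℂ A a).le_opNorm (a * x)
    simp only [ContinuousLinearMap.mul_apply'] at h
    nlinarith
  rcases eq_or_ne z 0 with hz | hz
  · rw [hz, norm_zero]
    nlinarith [mul_nonneg hμ0 hν0,
      mul_nonneg (mul_nonneg hμ0 hμ0) (by nlinarith : (0:ℝ) ≤ N * ν + N ^ 2)]
  obtain ⟨φ, hφ1, hφz'⟩ := exists_dual_vector ℂ z (norm_ne_zero_iff.mpr hz)
  have hφz : φ z = ((‖z‖ : ℝ) : ℂ) := by exact_mod_cast hφz'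
  have hznorm : ‖z‖ ≤ 1 + ‖μ‖ * N := by
    calc ‖z‖ ≤ ‖x‖ + ‖μ • (a * x)‖ := norm_add_le _ _
    _ ≤ 1 + ‖μ‖ * N := by
        rw [hx, norm_smul]
        have h : ‖μ‖ = ‖μ‖ := rfl
        nlinarith [norm_nonneg (a*x), hax]
  have hz0 : (0:ℝ) < ‖z‖ := norm_pos_iff.mpr hz
  have hzc : ((‖z‖ : ℝ) : ℂ) ≠ 0 := by exact_mod_cast hz0.ne'
  set y := (‖z‖⁻¹ : ℂ) • z with hydef
  have hy : ‖y‖ = 1 := by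
    rw [hydef, norm_smul]
    simp [norm_inv, hz0.ne']
  have hφy : φ y = 1 := by
    rw [hydef, map_smul, hφz, smul_eq_mul]
    field_simp
  have hay : a * y = (‖z‖⁻¹ : ℂ) • (a * x + μ • (a * (a * x))) := by
    rw [hydef, mul_smul_comm, hzdef, mul_add, mul_smul_comm]
  have hkey : ‖φ (a * y)‖ ≤ ν := abs_le_snr' a hy hφ1 hφy
  have h2 : ‖φ (a * (a * x))‖ ≤ N ^ 2 := by
    have := φ.le_opNorm (a * (a * x))
    rw [hφ1, one_mul] at this
    exact le_trans this haax
  have hφax : ‖φ (a * x)‖ ≤ ‖z‖ * ν + ‖μ‖ * N ^ 2 := by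
    have h1 : φ (a * x) = ((‖z‖ : ℝ) : ℂ) * φ (a * y) - μ * φ (a * (a * x)) := by
      rw [hay, map_smul, map_add, map_smul, smul_eq_mul, smul_eq_mul]
      field_simp
      ring
    rw [h1]
    calc ‖((‖z‖ : ℝ) : ℂ) * φ (a * y) - μ * φ (a * (a * x))‖
        ≤ ‖((‖z‖ : ℝ) : ℂ) * φ (a * y)‖ + ‖μ * φ (a * (a * x))‖ :=
          norm_sub_le _ _
      _ ≤ ‖z‖ * ν + ‖μ‖ * N ^ 2 := by
          rw [norm_mul, norm_mul]
          simp only [Complex.norm_real, Real.norm_of_nonneg hz0.le]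
          have := norm_nonneg (φ (a * y))
          nlinarith [mul_le_mul_of_nonneg_left hkey hz0.le, mul_le_mul_of_nonneg_left h2 hμ0]
  have hφx : ‖φ x‖ ≤ 1 := by
    have := φ.le_opNorm x
    rwa [hφ1, one_mul, hx] at this
  have hmain : ‖z‖ ≤ 1 + ‖μ‖ * (‖z‖ * ν + ‖μ‖ * N ^ 2) := by
    have h1 : φ z = φ x + μ * φ (a * x) := by
      rw [hzdef, map_add, map_smul, smul_eq_mul]
    have h2' : ‖z‖ ≤ ‖φ x‖ + ‖μ‖ * ‖φ (a * x)‖ := by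
      calc ‖z‖ = ‖φ z‖ := by
            rw [hφz, Complex.norm_real, Real.norm_of_nonneg hz0.le]
        _ = ‖φ x + μ * φ (a * x)‖ := by rw [h1]
        _ ≤ ‖φ x‖ + ‖μ * φ (a * x)‖ := norm_add_le _ _
        _ = ‖φ x‖ + ‖μ‖ * ‖φ (a * x)‖ := by
            rw [norm_mul]
    nlinarith [norm_nonneg (φ (a * x)), mul_le_mul_of_nonneg_left hφax hμ0]
  nlinarith [mul_le_mul_of_nonneg_left hznorm (mul_nonneg hμ0 hν0)]

lemma op_est' (μ : ℂ) :
    ‖(1 : A →L[ℂ] A) + μ • ContinuousLinearMap.mul ℂ A a‖ ≤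
      1 + ‖μ‖ * spatialNumericalRadius a +
      ‖μ‖ ^ 2 * (‖ContinuousLinearMap.mul ℂ A a‖ * spatialNumericalRadius a
        + ‖ContinuousLinearMap.mul ℂ A a‖ ^ 2) := by
  set ν := spatialNumericalRadius a with hν
  set N := ‖ContinuousLinearMap.mul ℂ A a‖ with hN
  have hν0 : 0 ≤ ν := snr_nonneg' a
  have hN0 : 0 ≤ N := norm_nonneg _
  have hμ0 : 0 ≤ ‖μ‖ := norm_nonneg μ
  have hR0 : 0 ≤ 1 + ‖μ‖ * ν + ‖μ‖ ^ 2 * (N * ν + N ^ 2) := by positivity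
  refine ContinuousLinearMap.opNorm_le_bound _ hR0 fun x => ?_
  have happ : ((1 : A →L[ℂ] A) + μ • ContinuousLinearMap.mul ℂ A a) x = x + μ • (a * x) := by
    simp [ContinuousLinearMap.add_apply, ContinuousLinearMap.smul_apply,
      ContinuousLinearMap.mul_apply']
  rw [happ]
  rcases eq_or_ne x 0 with hx | hx
  · simp [hx]
  have hx0 : (0:ℝ) < ‖x‖ := norm_pos_iff.mpr hx
  set u := (‖x‖⁻¹ : ℂ) • x with hudef
  have hu : ‖u‖ = 1 := by
    rw [hudef, norm_smul]
    simp [norm_inv, hx0.ne']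
  have hxu : x + μ • (a * x) = (‖x‖ : ℂ) • (u + μ • (a * u)) := by
    have hc : ((‖x‖ : ℝ) : ℂ) ≠ 0 := by exact_mod_cast hx0.ne'
    rw [hudef, mul_smul_comm, smul_add, smul_smul, mul_inv_cancel₀ hc, one_smul,
      smul_comm ((‖x‖:ℝ):ℂ) μ, smul_smul ((‖x‖:ℝ):ℂ), mul_inv_cancel₀ hc, one_smul]
  rw [hxu, norm_smul]
  have h1 : ‖((‖x‖ : ℝ) : ℂ)‖ = ‖x‖ := by
    simp [Complex.norm_real]
  rw [h1, mul_comm]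
  exact mul_le_mul_of_nonneg_right (key_est' a hu μ) hx0.le

lemma pow_est' (μ : ℂ) (n : ℕ) :
    ‖((1 : A →L[ℂ] A) + μ • ContinuousLinearMap.mul ℂ A a) ^ n‖ ≤
      (1 + ‖μ‖ * spatialNumericalRadius a +
      ‖μ‖ ^ 2 * (‖ContinuousLinearMap.mul ℂ A a‖ * spatialNumericalRadius a
        + ‖ContinuousLinearMap.mul ℂ A a‖ ^ 2)) ^ n := by
  rcases Nat.eq_zero_or_pos n with hn | hn
  · subst hn
    simp only [pow_zero]
    exact ContinuousLinearMap.norm_id_le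
  calc ‖((1 : A →L[ℂ] A) + μ • ContinuousLinearMap.mul ℂ A a) ^ n‖
      ≤ ‖(1 : A →L[ℂ] A) + μ • ContinuousLinearMap.mul ℂ A a‖ ^ n := norm_pow_le' _ hn
    _ ≤ _ := pow_le_pow_left₀ (norm_nonneg _) (op_est' a μ) n

/-- Bohnenblust–Karlin style bound obtained by a discrete Fourier extraction of the linear
coefficient of `(1 + (r ω^j / n) • L_a)^n` over the `(n+1)`-st roots of unity. -/
lemma fourier_est' (r : ℝ) (hr : 0 < r) {n : ℕ} (hn : 1 ≤ n) :
    ‖ContinuousLinearMap.mul ℂ A a‖ ≤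
      (1 + (r / n) * spatialNumericalRadius a +
      (r / n) ^ 2 * (‖ContinuousLinearMap.mul ℂ A a‖ * spatialNumericalRadius a
        + ‖ContinuousLinearMap.mul ℂ A a‖ ^ 2)) ^ n / r := by
  set T := ContinuousLinearMap.mul ℂ A a with hT
  set ν := spatialNumericalRadius a with hν
  set N := ‖T‖ with hN
  set R : ℝ := 1 + (r / n) * ν + (r / n) ^ 2 * (N * ν + N ^ 2) with hR
  set m : ℕ := n + 1 with hm
  have hm0 : (m : ℕ) ≠ 0 := by omega
  have hn0 : (n : ℂ) ≠ 0 := by exact_mod_cast Nat.one_le_iff_ne_zero.mp hn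
  set ω : ℂ := Complex.exp (2 * Real.pi * Complex.I / m) with hω
  have hprim : IsPrimitiveRoot ω m := Complex.isPrimitiveRoot_exp m hm0
  have hωm : ω ^ m = 1 := hprim.pow_eq_one
  have hωabs : ‖ω‖ = 1 := by
    have h1 : ‖ω‖ ^ m = 1 := by
      rw [← norm_pow, hωm, norm_one]
    by_contra h
    rcases lt_or_gt_of_ne h with hlt | hgt
    · have := pow_lt_one₀ (norm_nonneg ω) hlt hm0
      rw [h1] at this; exact lt_irrefl _ this
    · have := one_lt_pow₀ hgt hm0
      rw [h1] at this; exact lt_irrefl _ this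
  -- binomial expansion
  have hexpand : ∀ j : ℕ, ((1 : A →L[ℂ] A) + ((r : ℂ) * ω ^ j / n) • T) ^ n
      = ∑ k ∈ Finset.range (n + 1),
          (((r : ℂ) * ω ^ j / n) ^ k * (n.choose k : ℂ)) • T ^ k := by
    intro j
    rw [add_comm]
    rw [(Commute.one_right (((r : ℂ) * ω ^ j / n) • T)).add_pow]
    refine Finset.sum_congr rfl fun k hk => ?_
    rw [one_pow, mul_one, smul_pow]
    have hcast : ((n.choose k : ℕ) : A →L[ℂ] A) = ((n.choose k : ℂ)) • (1 : A →L[ℂ] A) := by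
      rw [Nat.cast_smul_eq_nsmul, nsmul_eq_mul, mul_one]
    rw [hcast, smul_mul_smul_comm, mul_one, mul_comm]
  -- geometric sums of roots of unity
  have hgeom : ∀ k ∈ Finset.range (n + 1),
      ∑ j ∈ Finset.range m, (ω ^ (m - 1 + k)) ^ j = if k = 1 then (m : ℂ) else 0 := by
    intro k hk
    simp only [Finset.mem_range] at hk
    rcases eq_or_ne k 1 with h1 | h1
    · subst h1
      have : ω ^ (m - 1 + 1) = 1 := by
        have : m - 1 + 1 = m := by omega
        rw [this, hωm]
      rw [this]
      simp
    · rw [if_neg h1]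
      have hζ1 : ω ^ (m - 1 + k) ≠ 1 := by
        intro hcon
        have hdvd : m ∣ (m - 1 + k) := hprim.pow_eq_one_iff_dvd _ |>.mp hcon
        have heq : m - 1 + k = m := Nat.eq_of_dvd_of_lt_two_mul (by omega) hdvd (by omega)
        omega
      have hζm : (ω ^ (m - 1 + k)) ^ m = 1 := by
        rw [← pow_mul, mul_comm, pow_mul, hωm, one_pow]
      rw [geom_sum_eq hζ1, hζm, sub_self, zero_div]
  -- the Fourier identity
  have hsum : ∑ j ∈ Finset.range m, (ω ^ ((m - 1) * j)) •
        ((1 : A →L[ℂ] A) + ((r : ℂ) * ω ^ j / n) • T) ^ n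
      = (((m : ℂ)) * (r : ℂ)) • T := by
    have step1 : ∀ j ∈ Finset.range m, (ω ^ ((m - 1) * j)) •
          ((1 : A →L[ℂ] A) + ((r : ℂ) * ω ^ j / n) • T) ^ n
        = ∑ k ∈ Finset.range (n + 1),
            ((ω ^ (m - 1 + k)) ^ j * (((r : ℂ) / n) ^ k * (n.choose k : ℂ))) • T ^ k := by
      intro j _
      rw [hexpand j, Finset.smul_sum]
      refine Finset.sum_congr rfl fun k _ => ?_
      rw [smul_smul]
      congr 1
      have h1 : ((r : ℂ) * ω ^ j / n) ^ k = ((r : ℂ) / n) ^ k * ω ^ (j * k) := by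
        rw [pow_mul, ← mul_pow]
        congr 1
        ring
      rw [h1]
      have h2 : ω ^ ((m - 1) * j) * ω ^ (j * k) = (ω ^ (m - 1 + k)) ^ j := by
        rw [← pow_add, ← pow_mul]
        congr 1
        ring
      calc ω ^ ((m - 1) * j) * (((r : ℂ) / n) ^ k * ω ^ (j * k) * (n.choose k : ℂ))
          = (ω ^ ((m - 1) * j) * ω ^ (j * k)) * (((r : ℂ) / n) ^ k * (n.choose k : ℂ)) := by
            ring
        _ = (ω ^ (m - 1 + k)) ^ j * (((r : ℂ) / n) ^ k * (n.choose k : ℂ)) := by rw [h2]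
    rw [Finset.sum_congr rfl step1, Finset.sum_comm]
    have step2 : ∀ k ∈ Finset.range (n + 1),
        ∑ j ∈ Finset.range m,
          ((ω ^ (m - 1 + k)) ^ j * (((r : ℂ) / n) ^ k * (n.choose k : ℂ))) • T ^ k
        = ((if k = 1 then (m : ℂ) else 0) * (((r : ℂ) / n) ^ k * (n.choose k : ℂ))) • T ^ k := by
      intro k hk
      rw [← Finset.sum_smul, ← Finset.sum_mul, hgeom k hk]
    rw [Finset.sum_congr rfl step2]
    rw [Finset.sum_eq_single 1
      (fun b _ hb => by rw [if_neg hb, zero_mul, zero_smul])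
      (fun h => absurd (Finset.mem_range.mpr (by omega)) h)]
    rw [if_pos rfl, pow_one, Nat.choose_one_right, pow_one]
    congr 1
    field_simp
  -- norms
  have hR0 : 0 ≤ R := by
    have hν0 : 0 ≤ ν := snr_nonneg' a
    have hN0 : 0 ≤ N := norm_nonneg _
    have : 0 ≤ r / n := by positivity
    positivity
  have hnorm_each : ∀ j ∈ Finset.range m, ‖(ω ^ ((m - 1) * j)) •
      ((1 : A →L[ℂ] A) + ((r : ℂ) * ω ^ j / n) • T) ^ n‖ ≤ R ^ n := by
    intro j _
    have hns := norm_smul (ω ^ ((m - 1) * j))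
      (((1 : A →L[ℂ] A) + ((r : ℂ) * ω ^ j / n) • T) ^ n)
    rw [hns]
    have h1 : ‖ω ^ ((m - 1) * j)‖ = 1 := by
      rw [norm_pow]
      have h : ‖ω‖ = 1 := hωabs
      rw [h, one_pow]
    rw [h1, one_mul]
    have h2 : ‖(r : ℂ) * ω ^ j / n‖ = r / n := by
      rw [norm_div, norm_mul, norm_pow, hωabs, one_pow, mul_one, Complex.norm_real,
        Complex.norm_natCast, Real.norm_of_nonneg hr.le]
    have := pow_est' a ((r : ℂ) * ω ^ j / n) n
    rw [h2] at this
    exact this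
  have hfinal : (m : ℝ) * r * ‖T‖ ≤ (m : ℝ) * R ^ n := by
    have hL : ‖(((m : ℂ)) * (r : ℂ)) • T‖ = (m : ℝ) * r * ‖T‖ := by
      have hns := norm_smul (((m : ℂ)) * (r : ℂ)) T
      rw [hns, norm_mul, Complex.norm_natCast, Complex.norm_real,
        Real.norm_of_nonneg hr.le]
    calc (m : ℝ) * r * ‖T‖ = ‖(((m : ℂ)) * (r : ℂ)) • T‖ := hL.symm
      _ = ‖∑ j ∈ Finset.range m, (ω ^ ((m - 1) * j)) •
            ((1 : A →L[ℂ] A) + ((r : ℂ) * ω ^ j / n) • T) ^ n‖ := by rw [hsum]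
      _ ≤ ∑ j ∈ Finset.range m, ‖(ω ^ ((m - 1) * j)) •
            ((1 : A →L[ℂ] A) + ((r : ℂ) * ω ^ j / n) • T) ^ n‖ := norm_sum_le _ _
      _ ≤ ∑ _j ∈ Finset.range m, R ^ n := Finset.sum_le_sum hnorm_each
      _ = (m : ℝ) * R ^ n := by rw [Finset.sum_const, Finset.card_range, nsmul_eq_mul]
  have hmpos : (0 : ℝ) < m := by positivity
  rw [le_div_iff₀ hr]
  nlinarith [hfinal, hmpos]

end auxiliary

theorem stmt12 {A : Type*} [NonUnitalNormedRing A] [NormedSpace ℂ A]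
    [SMulCommClass ℂ A A] [IsScalarTower ℂ A A]
    (hfaithful : ∀ b : A, (∀ x : A, b * x = 0) → b = 0)
    (hnoid : ¬ ∃ e : A, ∀ x : A, e * x = x ∧ x * e = x)
    (a : A) :
    (1 / Real.exp 1) * ‖ContinuousLinearMap.mul ℂ A a‖ ≤ spatialNumericalRadius a ∧
      spatialNumericalRadius a ≤ ‖ContinuousLinearMap.mul ℂ A a‖ := by
  refine ⟨?_, snr_le_opNorm' a⟩
  set ν := spatialNumericalRadius a with hν
  set N := ‖ContinuousLinearMap.mul ℂ A a‖ with hN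
  set B : ℝ := N * ν + N ^ 2 with hB
  have hν0 : 0 ≤ ν := snr_nonneg' a
  have hN0 : 0 ≤ N := norm_nonneg _
  have hB0 : 0 ≤ B := by positivity
  have fourier_est : ∀ r : ℝ, 0 < r → ∀ n : ℕ, 1 ≤ n →
      N ≤ (1 + (r / n) * ν + (r / n) ^ 2 * B) ^ n / r := fun r hr n hn =>
    fourier_est' a r hr hn
  have key : ∀ r : ℝ, 0 < r → N ≤ Real.exp (r * ν) / r := by
    intro r hr
    have htends : Filter.Tendsto (fun n : ℕ => Real.exp (r * ν + r ^ 2 * B / n) / r)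
        Filter.atTop (nhds (Real.exp (r * ν) / r)) := by
      have h1 : Filter.Tendsto (fun n : ℕ => r ^ 2 * B / n) Filter.atTop (nhds 0) :=
        tendsto_const_div_atTop_nhds_zero_nat _
      have h2 : Filter.Tendsto (fun n : ℕ => r * ν + r ^ 2 * B / n) Filter.atTop
          (nhds (r * ν)) := by
        simpa using (tendsto_const_nhds.add h1)
      exact ((Real.continuous_exp.tendsto (r * ν)).comp h2).div_const r
    refine ge_of_tendsto htends (Filter.eventually_atTop.mpr ⟨1, fun n hn => ?_⟩)
    have hn0 : (0:ℝ) < n := by exact_mod_cast hn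
    have hu0 : 0 ≤ (r / n) * ν + (r / n) ^ 2 * B := by positivity
    have hR : 1 + (r / n) * ν + (r / n) ^ 2 * B ≤
        Real.exp ((r / n) * ν + (r / n) ^ 2 * B) := by
      have := Real.add_one_le_exp ((r / n) * ν + (r / n) ^ 2 * B)
      linarith
    have hRn : (1 + (r / n) * ν + (r / n) ^ 2 * B) ^ n ≤
        Real.exp (r * ν + r ^ 2 * B / n) := by
      calc (1 + (r / n) * ν + (r / n) ^ 2 * B) ^ n
          ≤ (Real.exp ((r / n) * ν + (r / n) ^ 2 * B)) ^ n :=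
            pow_le_pow_left₀ (by positivity) hR n
        _ = Real.exp ((n : ℝ) * ((r / n) * ν + (r / n) ^ 2 * B)) := by
            rw [← Real.exp_nat_mul]
        _ = Real.exp (r * ν + r ^ 2 * B / n) := by
            congr 1
            field_simp
    calc N ≤ (1 + (r / n) * ν + (r / n) ^ 2 * B) ^ n / r := fourier_est r hr n hn
      _ ≤ Real.exp (r * ν + r ^ 2 * B / n) / r := by gcongr
  rcases eq_or_lt_of_le hν0 with hνeq | hνpos
  · have hNle : N ≤ 0 := by
      by_contra h
      push_neg at h
      have := key (2 / N) (by positivity)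
      rw [← hνeq] at this
      simp only [mul_zero, Real.exp_zero] at this
      rw [one_div, inv_div] at this
      linarith
    have hN0' : N = 0 := le_antisymm hNle hN0
    rw [hN0', mul_zero, ← hνeq]
  · have h := key ν⁻¹ (by positivity)
    have heq : Real.exp (ν⁻¹ * ν) / ν⁻¹ = Real.exp 1 * ν := by
      rw [inv_mul_cancel₀ hνpos.ne']
      field_simp
    rw [heq] at h
    have hepos := Real.exp_pos 1
    have hinv : (1 / Real.exp 1) * Real.exp 1 = 1 := by field_simp
    nlinarith [mul_le_mul_of_nonneg_left h (le_of_lt (one_div_pos.mpr hepos))]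
end

section
/- Let A be a complex Banach algebra (complete normed algebra) that is faithful and has no identity element, and suppose the norm of A is regular, i.e. ‖L_a‖ = ‖a‖ for every a ∈ A, where L_a is left multiplication by a. Then for every a ∈ A, 0 belongs to the closed convex hull of the spatial numerical range V_A(a). -/
/-- Every point of the frontier of the spectrum of left multiplication by `a` lies in the
closure of the spatial numerical range of `a` (it is an approximate eigenvalue). -/
lemma frontier_spectrum_subset_closure_snr {A : Type*} [NonUnitalNormedRing A]
    [NormedSpace ℂ A] [CompleteSpace A] [SMulCommClass ℂ A A] [IsScalarTower ℂ A A]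
    [Nontrivial A] (a : A) :
    frontier (spectrum ℂ (ContinuousLinearMap.mul ℂ A a)) ⊆
      closure (spatialNumericalRange a) := by
  set T := ContinuousLinearMap.mul ℂ A a with hTdef
  intro l hl
  have hlσ : l ∈ spectrum ℂ T := by
    have := frontier_subset_closure (s := spectrum ℂ T) hl
    rwa [(spectrum.isClosed (𝕜 := ℂ) T).closure_eq] at this
  rw [Metric.mem_closure_iff]
  intro ε hε
  -- find μ outside the spectrum close to l
  have hlc : l ∈ closure (spectrum ℂ T)ᶜ := by
    rw [frontier_eq_closure_inter_closure] at hl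
    exact hl.2
  rw [Metric.mem_closure_iff] at hlc
  obtain ⟨μ, hμc, hμd⟩ := hlc (ε / 4) (by linarith)
  have hμ : IsUnit (algebraMap ℂ (A →L[ℂ] A) μ - T) := by
    rwa [Set.mem_compl_iff, spectrum.notMem_iff] at hμc
  obtain ⟨u, hu⟩ := hμ
  set R : A →L[ℂ] A := ((u⁻¹ : (A →L[ℂ] A)ˣ) : A →L[ℂ] A) with hRdef
  have hdpos : 0 < dist l μ := by
    rw [dist_pos]
    intro h
    rw [h] at hlσ
    rw [Set.mem_compl_iff] at hμc
    exact hμc hlσ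
  -- resolvent norm estimate: ‖R‖⁻¹ ≤ dist l μ
  have hinv : ‖R‖⁻¹ ≤ dist l μ := by
    by_contra h
    push_neg at h
    have hnear : ‖(algebraMap ℂ (A →L[ℂ] A) l - T) - ↑u‖ < ‖R‖⁻¹ := by
      have : (algebraMap ℂ (A →L[ℂ] A) l - T) - ↑u = algebraMap ℂ (A →L[ℂ] A) (l - μ) := by
        rw [hu, map_sub]; abel
      rw [this]
      calc ‖algebraMap ℂ (A →L[ℂ] A) (l - μ)‖ = ‖l - μ‖ := norm_algebraMap' _ _
        _ = dist l μ := (dist_eq_norm l μ).symm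
        _ < ‖R‖⁻¹ := h
    have : IsUnit (algebraMap ℂ (A →L[ℂ] A) l - T) :=
      (Units.ofNearby u (algebraMap ℂ (A →L[ℂ] A) l - T) hnear).isUnit
    rw [← spectrum.notMem_iff] at this
    exact this hlσ
  have hRne : R ≠ 0 := by
    intro h0
    obtain ⟨x, hx⟩ := exists_ne (0 : A)
    have h1 : ((↑u⁻¹ * ↑u : A →L[ℂ] A)) x = x := by rw [u.inv_mul]; rfl
    rw [ContinuousLinearMap.mul_apply, ← hRdef, h0] at h1
    simp at h1
    exact hx h1.symm
  have hRpos : 0 < ‖R‖ := norm_pos_iff.mpr hRne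
  -- nearly norming vector for R
  have hz : ∃ z : A, ‖R‖ / 2 * ‖z‖ < ‖R z‖ := by
    by_contra h
    push_neg at h
    have := R.opNorm_le_bound (by positivity) h
    linarith
  obtain ⟨z, hz⟩ := hz
  have hRzpos : 0 < ‖R z‖ := lt_of_le_of_lt (by positivity) hz
  set x : A := ((‖R z‖⁻¹ : ℝ) : ℂ) • R z with hxdef
  have hx1 : ‖x‖ = 1 := by
    rw [hxdef, norm_smul, Complex.norm_real, Real.norm_eq_abs,
      abs_of_nonneg (by positivity), inv_mul_cancel₀ hRzpos.ne']
  have hux : (algebraMap ℂ (A →L[ℂ] A) μ - T) x = (‖R z‖⁻¹ : ℂ) • z := by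
    rw [← hu, hxdef]
    have : (↑u : A →L[ℂ] A) (R z) = z := by
      have h1 : ((↑u * ↑u⁻¹ : A →L[ℂ] A)) z = z := by rw [u.mul_inv]; rfl
      rwa [ContinuousLinearMap.mul_apply, ← hRdef] at h1
    rw [map_smul, this, Complex.ofReal_inv]
  have hTx : ‖μ • x - T x‖ ≤ 2 * dist l μ := by
    have h1 : μ • x - T x = (algebraMap ℂ (A →L[ℂ] A) μ - T) x := by
      simp [Algebra.algebraMap_eq_smul_one, ContinuousLinearMap.sub_apply,
        ContinuousLinearMap.smul_apply, ContinuousLinearMap.one_apply]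
    rw [h1, hux]
    have h2 : ‖((‖R z‖ : ℂ))⁻¹ • z‖ = ‖R z‖⁻¹ * ‖z‖ := by
      rw [norm_smul, norm_inv, Complex.norm_real, Real.norm_eq_abs, abs_of_nonneg (norm_nonneg _)]
    rw [h2]
    have h3 : ‖z‖ ≤ 2 * ‖R‖⁻¹ * ‖R z‖ := by
      rw [div_mul_eq_mul_div] at hz
      calc ‖z‖ = ‖R‖⁻¹ * (‖R‖ * ‖z‖) := by field_simp
        _ ≤ ‖R‖⁻¹ * (2 * ‖R z‖) := by
            apply mul_le_mul_of_nonneg_left _ (by positivity)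
            nlinarith
        _ = 2 * ‖R‖⁻¹ * ‖R z‖ := by ring
    calc ‖R z‖⁻¹ * ‖z‖ ≤ ‖R z‖⁻¹ * (2 * ‖R‖⁻¹ * ‖R z‖) := by
          apply mul_le_mul_of_nonneg_left h3 (by positivity)
      _ = 2 * ‖R‖⁻¹ := by
          field_simp
      _ ≤ 2 * dist l μ := by nlinarith
  -- construct the functional
  have hxne : x ≠ 0 := by
    intro h
    rw [h, norm_zero] at hx1
    norm_num at hx1
  obtain ⟨φ, hφ1, hφx⟩ := exists_dual_vector ℂ x (norm_ne_zero_iff.mpr hxne)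
  refine ⟨φ (a * x), ⟨x, hx1, φ, hφ1, by rw [hφx, hx1]; norm_num, rfl⟩, ?_⟩
  have hax : a * x = T x := by
    rw [hTdef, ContinuousLinearMap.mul_apply']
  have hφxl : φ (l • x) = l := by
    rw [map_smul, hφx, hx1]
    norm_num
  have hkey : ‖l - φ (a * x)‖ ≤ 3 * dist l μ := by
    have : l - φ (a * x) = φ (l • x - a * x) := by
      rw [map_sub, hφxl]
    rw [this]
    calc ‖φ (l • x - a * x)‖ ≤ ‖φ‖ * ‖l • x - a * x‖ := φ.le_opNorm _
      _ = ‖l • x - a * x‖ := by rw [hφ1, one_mul]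
      _ ≤ ‖l • x - μ • x‖ + ‖μ • x - T x‖ := by
          rw [hax]
          exact norm_sub_le_norm_sub_add_norm_sub _ _ _
      _ ≤ dist l μ + 2 * dist l μ := by
          apply add_le_add _ hTx
          rw [← sub_smul, norm_smul, hx1, mul_one, dist_eq_norm]
      _ = 3 * dist l μ := by ring
  rw [dist_eq_norm]
  calc ‖l - φ (a * x)‖ ≤ 3 * dist l μ := hkey
    _ < ε := by linarith

theorem stmt14 {A : Type*} [NonUnitalNormedRing A] [NormedSpace ℂ A] [CompleteSpace A]
    [SMulCommClass ℂ A A] [IsScalarTower ℂ A A]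
    (hfaithful : ∀ b : A, (∀ x : A, b * x = 0) → b = 0)
    (hnoid : ¬ ∃ e : A, ∀ x : A, e * x = x ∧ x * e = x)
    (hregular : ∀ b : A, ‖ContinuousLinearMap.mul ℂ A b‖ = ‖b‖)
    (a : A) :
    (0 : ℂ) ∈ closure (convexHull ℝ (spatialNumericalRange a)) := by
  haveI : Nontrivial A := by
    by_contra h
    rw [not_nontrivial_iff_subsingleton] at h
    exact hnoid ⟨0, fun x => ⟨Subsingleton.elim _ _, Subsingleton.elim _ _⟩⟩
  set T := ContinuousLinearMap.mul ℂ A a with hTdef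
  -- 0 is in the spectrum of T, since A has no identity
  have h0σ : (0 : ℂ) ∈ spectrum ℂ T := by
    rw [spectrum.zero_mem_iff]
    rintro ⟨u, hu⟩
    set S : A →L[ℂ] A := ((u⁻¹ : (A →L[ℂ] A)ˣ) : A →L[ℂ] A) with hSdef
    have hTS : ∀ y : A, a * S y = y := by
      intro y
      have h1 : ((↑u * ↑u⁻¹ : A →L[ℂ] A)) y = y := by rw [u.mul_inv]; rfl
      rw [ContinuousLinearMap.mul_apply, hu, hTdef, ContinuousLinearMap.mul_apply'] at h1
      exact h1
    have hST : ∀ y : A, S (a * y) = y := by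
      intro y
      have h1 : ((↑u⁻¹ * ↑u : A →L[ℂ] A)) y = y := by rw [u.inv_mul]; rfl
      rw [ContinuousLinearMap.mul_apply, hu, hTdef, ContinuousLinearMap.mul_apply'] at h1
      exact h1
    set e : A := S a with hedef
    have hleft : ∀ x : A, e * x = x := by
      intro x
      have hae : a * e = a := hTS a
      have h2 : a * (e * x) = a * x := by rw [← mul_assoc, hae]
      have h3 := hST (e * x)
      rw [h2, hST x] at h3
      exact h3.symm
    have hright : ∀ x : A, x * e = x := by
      intro x
      have h4 : ∀ y : A, (x * e - x) * y = 0 := by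
        intro y
        rw [sub_mul, mul_assoc, hleft y, sub_self]
      have := hfaithful _ h4
      rwa [sub_eq_zero] at this
    exact hnoid ⟨e, fun x => ⟨hleft x, hright x⟩⟩
  have hK : IsCompact (spectrum ℂ T) := spectrum.isCompact T
  obtain ⟨C, hC⟩ := hK.isBounded.exists_norm_le
  set Sr : Set ℝ := {t : ℝ | (t : ℂ) ∈ spectrum ℂ T} with hSrdef
  have h0S : (0 : ℝ) ∈ Sr := by
    simp only [hSrdef, Set.mem_setOf_eq, Complex.ofReal_zero]
    exact h0σ
  have hbddA : BddAbove Sr := by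
    refine ⟨C, fun t ht => ?_⟩
    have := hC _ ht
    rw [Complex.norm_real] at this
    exact le_of_abs_le this
  have hbddB : BddBelow Sr := by
    refine ⟨-C, fun t ht => ?_⟩
    have := hC _ ht
    rw [Complex.norm_real] at this
    exact neg_le_of_abs_le this
  have hSrclosed : IsClosed Sr :=
    IsClosed.preimage Complex.continuous_ofReal (spectrum.isClosed T)
  set tp : ℝ := sSup Sr with htpdef
  set tm : ℝ := sInf Sr with htmdef
  have htpS : tp ∈ Sr := hSrclosed.csSup_mem ⟨0, h0S⟩ hbddA
  have htmS : tm ∈ Sr := hSrclosed.csInf_mem ⟨0, h0S⟩ hbddB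
  have htp0 : 0 ≤ tp := le_csSup hbddA h0S
  have htm0 : tm ≤ 0 := csInf_le hbddB h0S
  -- tp and tm are frontier points of the spectrum
  have hfp : (tp : ℂ) ∈ frontier (spectrum ℂ T) := by
    constructor
    · exact subset_closure htpS
    · intro hint
      obtain ⟨δ, hδ, hball⟩ := Metric.isOpen_iff.mp isOpen_interior _ hint
      have hmem : ((tp + δ / 2 : ℝ) : ℂ) ∈ spectrum ℂ T := by
        apply interior_subset
        apply hball
        rw [Metric.mem_ball, Complex.dist_eq]
        have h8 : (((tp + δ / 2 : ℝ) : ℂ) - (tp : ℂ)) = ((δ/2 : ℝ) : ℂ) := by push_cast; ring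
        rw [h8, Complex.norm_real, Real.norm_eq_abs, abs_of_pos (by linarith)]
        linarith
      have := le_csSup hbddA (show tp + δ / 2 ∈ Sr from hmem)
      linarith
  have hfm : (tm : ℂ) ∈ frontier (spectrum ℂ T) := by
    constructor
    · exact subset_closure htmS
    · intro hint
      obtain ⟨δ, hδ, hball⟩ := Metric.isOpen_iff.mp isOpen_interior _ hint
      have hmem : ((tm - δ / 2 : ℝ) : ℂ) ∈ spectrum ℂ T := by
        apply interior_subset
        apply hball
        rw [Metric.mem_ball, Complex.dist_eq]
        have h8 : (((tm - δ / 2 : ℝ) : ℂ) - (tm : ℂ)) = ((-(δ/2) : ℝ) : ℂ) := by push_cast; ring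
        rw [h8, Complex.norm_real, Real.norm_eq_abs, abs_neg, abs_of_pos (by linarith)]
        linarith
      have := csInf_le hbddB (show tm - δ / 2 ∈ Sr from hmem)
      linarith
  -- both lie in the closed convex hull of the spatial numerical range
  have hsub : frontier (spectrum ℂ T) ⊆ closure (convexHull ℝ (spatialNumericalRange a)) :=
    fun w hw => closure_mono (subset_convexHull ℝ _)
      (frontier_spectrum_subset_closure_snr a hw)
  have hCconv : Convex ℝ (closure (convexHull ℝ (spatialNumericalRange a))) :=
    (convex_convexHull ℝ _).closure
  have hpC := hsub hfp
  have hmC := hsub hfm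
  -- 0 is a convex combination of tm and tp
  rcases eq_or_lt_of_le htp0 with h | h
  · rw [← h] at hfp
    have := hsub hfp
    simpa using this
  · set c1 : ℝ := tp / (tp - tm) with hc1
    set c2 : ℝ := -tm / (tp - tm) with hc2
    have hden : 0 < tp - tm := by linarith
    have hc1nn : 0 ≤ c1 := by positivity
    have hc2nn : 0 ≤ c2 := by
      apply div_nonneg (by linarith) (by linarith)
    have hsum : c1 + c2 = 1 := by
      rw [hc1, hc2]
      field_simp
      ring
    have hmemC := hCconv hmC hpC hc1nn hc2nn hsum
    have h9 : c1 * tm + c2 * tp = 0 := by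
      rw [hc1, hc2]
      field_simp
      ring
    have hcomb : c1 • (tm : ℂ) + c2 • (tp : ℂ) = 0 := by
      calc c1 • (tm : ℂ) + c2 • (tp : ℂ) = ((c1 * tm + c2 * tp : ℝ) : ℂ) := by
            rw [Complex.real_smul, Complex.real_smul]
            push_cast
            ring
        _ = 0 := by rw [h9]; norm_cast
    rwa [hcomb] at hmemC
end

section
/- Let A be a complex normed algebra with no identity element and let a ∈ A. Then the closed convex hull of V_A(a) ∪ {0} is contained in V_{A_e^1}(a; 1) = {f((a, 0)) : f a continuous linear functional on A_e^1 with ‖f‖ = 1 and f((0, 1)) = 1}, where A_e^1 is the unitization A × ℂ equipped with the ℓ¹-norm ‖(b, λ)‖ = ‖b‖ + |λ|. -/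
/-- The unitization `A_e = A × ℂ` endowed with the ℓ¹-norm `‖(b, λ)‖₁ = ‖b‖ + |λ|`,
realized as `WithLp 1 (A × ℂ)`; its identity element is `(0, 1)`. -/
noncomputable abbrev unitizationL1 (A : Type*) [NonUnitalNormedRing A] [NormedSpace ℂ A] :=
  WithLp 1 (A × ℂ)

lemma l1_norm_eq {A : Type*} [NonUnitalNormedRing A] [NormedSpace ℂ A]
    (f : unitizationL1 A) : ‖f‖ = ‖f.fst‖ + ‖f.snd‖ := by
  rw [WithLp.prod_norm_eq_add (by norm_num)]
  norm_num

theorem stmt15 {A : Type*} [NonUnitalNormedRing A] [NormedSpace ℂ A]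
    (hnoid : ¬ ∃ e : A, ∀ x : A, e * x = x ∧ x * e = x)
    (a : A) :
    closure (convexHull ℝ (spatialNumericalRange a ∪ {0})) ⊆
      {z : ℂ | ∃ f : unitizationL1 A →L[ℂ] ℂ, ‖f‖ = 1 ∧
        f ((WithLp.equiv 1 (A × ℂ)).symm (0, 1)) = 1 ∧
        f ((WithLp.equiv 1 (A × ℂ)).symm (a, 0)) = z} := by
  -- Step 1: the LHS is contained in the closed disk of radius ‖a‖.
  have hsub : closure (convexHull ℝ (spatialNumericalRange a ∪ {0})) ⊆
      Metric.closedBall (0 : ℂ) ‖a‖ := by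
    have h1 : spatialNumericalRange a ∪ {0} ⊆ Metric.closedBall (0 : ℂ) ‖a‖ := by
      rintro z (⟨x, hx, φ, hφ, hφx, hφax⟩ | hz)
      · simp only [Metric.mem_closedBall, dist_zero_right]
        calc ‖z‖ = ‖φ (a * x)‖ := by rw [hφax]
        _ ≤ ‖φ‖ * ‖a * x‖ := φ.le_opNorm _
        _ ≤ 1 * (‖a‖ * ‖x‖) := by
            exact mul_le_mul hφ.le (norm_mul_le _ _) (norm_nonneg _) zero_le_one
        _ = ‖a‖ := by rw [hx, one_mul, mul_one]
      · simp only [Set.mem_singleton_iff] at hz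
        simp [hz, norm_nonneg]
    have h2 := convexHull_min h1 (convex_closedBall _ _)
    exact closure_minimal h2 Metric.isClosed_closedBall
  -- Step 2: every point of the closed disk lies in the RHS.
  intro z hz
  have hz' : ‖z‖ ≤ ‖a‖ := by
    have := hsub hz
    simpa [dist_zero_right] using this
  -- Find g : A →L[ℂ] ℂ with ‖g‖ ≤ 1 and g a = z.
  obtain ⟨g, hg1, hg2⟩ : ∃ g : A →L[ℂ] ℂ, ‖g‖ ≤ 1 ∧ g a = z := by
    by_cases ha : a = 0
    · refine ⟨0, by simp, ?_⟩
      have : ‖z‖ ≤ 0 := by simpa [ha] using hz'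
      have : z = 0 := by simpa using norm_le_zero_iff.mp this
      simp [this]
    · obtain ⟨g₀, hg₀, hg₀a⟩ := exists_dual_vector ℂ a (norm_ne_zero_iff.mpr ha)
      have hna : (0:ℝ) < ‖a‖ := norm_pos_iff.mpr ha
      have hnc : ((‖a‖ : ℝ) : ℂ) ≠ 0 := by exact_mod_cast hna.ne'
      refine ⟨((z / ‖a‖ : ℂ)) • g₀, ?_, ?_⟩
      · rw [norm_smul (z / (‖a‖:ℂ)) g₀, hg₀, mul_one, norm_div]
        rw [div_le_one (by simpa using hna)]
        simpa using hz'
      · simp only [ContinuousLinearMap.smul_apply, hg₀a, smul_eq_mul]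
        field_simp
        rfl
  -- Build f on the unitization: f (b, λ) = g b + λ.
  set L : unitizationL1 A →ₗ[ℂ] ℂ :=
    (g.toLinearMap.comp (LinearMap.fst ℂ A ℂ) + LinearMap.snd ℂ A ℂ).comp
      (WithLp.linearEquiv 1 ℂ (A × ℂ)).toLinearMap with hL
  have hLapply : ∀ p : unitizationL1 A, L p = g p.fst + p.snd := fun p => rfl
  have hbound : ∀ p : unitizationL1 A, ‖L p‖ ≤ 1 * ‖p‖ := by
    intro p
    rw [hLapply, one_mul, l1_norm_eq]
    calc ‖g p.fst + p.snd‖ ≤ ‖g p.fst‖ + ‖p.snd‖ := norm_add_le _ _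
    _ ≤ 1 * ‖p.fst‖ + ‖p.snd‖ := by
        gcongr
        calc ‖g p.fst‖ ≤ ‖g‖ * ‖p.fst‖ := g.le_opNorm _
        _ ≤ 1 * ‖p.fst‖ := by gcongr
    _ = ‖p.fst‖ + ‖p.snd‖ := by ring
  set f : unitizationL1 A →L[ℂ] ℂ := L.mkContinuous 1 hbound with hf
  have hfone : f ((WithLp.equiv 1 (A × ℂ)).symm (0, 1)) = 1 := by
    show L _ = 1
    rw [hLapply]
    simp
  refine ⟨f, ?_, hfone, ?_⟩
  · refine le_antisymm (L.mkContinuous_norm_le zero_le_one hbound) ?_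
    have h1 : ‖f ((WithLp.equiv 1 (A × ℂ)).symm (0, 1))‖ ≤
        ‖f‖ * ‖(WithLp.equiv 1 (A × ℂ)).symm (0, 1)‖ := f.le_opNorm _
    rw [hfone] at h1
    have hn : ‖(WithLp.equiv 1 (A × ℂ)).symm ((0 : A), (1 : ℂ))‖ = 1 := by
      rw [l1_norm_eq]
      simp
    rw [hn, mul_one] at h1
    simpa using h1
  · show L _ = z
    rw [hLapply]
    simpa using hg2
end

section
/- Let A be a complex normed algebra with no identity element and let a ∈ A. Then (1/e)·‖a‖ ≤ sup {|f((a, 0))| : f a continuous linear functional on A_e^1 with ‖f‖ = 1 and f((0, 1)) = 1} ≤ ‖a‖, where A_e^1 is the unitization A × ℂ equipped with the ℓ¹-norm ‖(b, λ)‖ = ‖b‖ + |λ|, and e is Euler's number. -/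
theorem stmt16 {A : Type*} [NonUnitalNormedRing A] [NormedSpace ℂ A]
    (hnoid : ¬ ∃ e : A, ∀ x : A, e * x = x ∧ x * e = x)
    (a : A) :
    (1 / Real.exp 1) * ‖a‖ ≤
      sSup {r : ℝ | ∃ f : unitizationL1 A →L[ℂ] ℂ, ‖f‖ = 1 ∧
        f ((WithLp.equiv 1 (A × ℂ)).symm (0, 1)) = 1 ∧
        ‖f ((WithLp.equiv 1 (A × ℂ)).symm (a, 0))‖ = r} ∧
    sSup {r : ℝ | ∃ f : unitizationL1 A →L[ℂ] ℂ, ‖f‖ = 1 ∧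
        f ((WithLp.equiv 1 (A × ℂ)).symm (0, 1)) = 1 ∧
        ‖f ((WithLp.equiv 1 (A × ℂ)).symm (a, 0))‖ = r} ≤ ‖a‖ := by
  have hnorm : ∀ x : unitizationL1 A, ‖x‖ = ‖x.fst‖ + ‖x.snd‖ := by
    intro x
    rw [WithLp.prod_norm_eq_add (by norm_num)]
    norm_num
  have hnorm' : ∀ (b : A) (μ : ℂ), ‖(WithLp.equiv 1 (A × ℂ)).symm (b, μ)‖ = ‖b‖ + ‖μ‖ := by
    intro b μ; rw [hnorm]; rfl
  -- upper bound
  have hub : ∀ r ∈ {r : ℝ | ∃ f : unitizationL1 A →L[ℂ] ℂ, ‖f‖ = 1 ∧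
        f ((WithLp.equiv 1 (A × ℂ)).symm (0, 1)) = 1 ∧
        ‖f ((WithLp.equiv 1 (A × ℂ)).symm (a, 0))‖ = r}, r ≤ ‖a‖ := by
    rintro r ⟨f, hf1, hf2, hf3⟩
    rw [← hf3]
    calc ‖f ((WithLp.equiv 1 (A × ℂ)).symm (a, 0))‖
        ≤ ‖f‖ * ‖(WithLp.equiv 1 (A × ℂ)).symm (a, 0)‖ := f.le_opNorm _
      _ = ‖a‖ := by rw [hf1, hnorm']; simp
  -- construct a witness
  obtain ⟨g, hg_le, hga⟩ : ∃ g : A →L[ℂ] ℂ, ‖g‖ ≤ 1 ∧ g a = ‖a‖ := by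
    by_cases h : a = 0
    · exact ⟨0, by simp, by simp [h]⟩
    · obtain ⟨g, hg, hga⟩ := exists_dual_vector ℂ a (norm_ne_zero_iff.mpr h)
      exact ⟨g, hg.le, hga⟩
  set f : unitizationL1 A →L[ℂ] ℂ :=
    (g.coprod (ContinuousLinearMap.id ℂ ℂ)).comp
      (WithLp.prodContinuousLinearEquiv 1 ℂ A ℂ).toContinuousLinearMap with hf_def
  have hfapp : ∀ (b : A) (μ : ℂ), f ((WithLp.equiv 1 (A × ℂ)).symm (b, μ)) = g b + μ := by
    intro b μ
    simp [hf_def]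
  have hf2 : f ((WithLp.equiv 1 (A × ℂ)).symm (0, 1)) = 1 := by
    rw [hfapp]; simp
  have hf1 : ‖f‖ = 1 := by
    apply le_antisymm
    · apply f.opNorm_le_bound zero_le_one
      intro x
      have : f x = g x.fst + x.snd := hfapp x.fst x.snd
      rw [this, hnorm, one_mul]
      calc ‖g x.fst + x.snd‖ ≤ ‖g x.fst‖ + ‖x.snd‖ := norm_add_le _ _
        _ ≤ ‖g‖ * ‖x.fst‖ + ‖x.snd‖ := by gcongr; exact g.le_opNorm _
        _ ≤ 1 * ‖x.fst‖ + ‖x.snd‖ := by gcongr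
        _ = ‖x.fst‖ + ‖x.snd‖ := by ring
    · have h := f.le_opNorm ((WithLp.equiv 1 (A × ℂ)).symm (0, 1))
      rw [hf2, hnorm'] at h
      simpa using h
  have hmem : ‖a‖ ∈ {r : ℝ | ∃ f : unitizationL1 A →L[ℂ] ℂ, ‖f‖ = 1 ∧
        f ((WithLp.equiv 1 (A × ℂ)).symm (0, 1)) = 1 ∧
        ‖f ((WithLp.equiv 1 (A × ℂ)).symm (a, 0))‖ = r} := by
    refine ⟨f, hf1, hf2, ?_⟩
    rw [hfapp]
    simp [hga]
  have hbdd : BddAbove {r : ℝ | ∃ f : unitizationL1 A →L[ℂ] ℂ, ‖f‖ = 1 ∧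
        f ((WithLp.equiv 1 (A × ℂ)).symm (0, 1)) = 1 ∧
        ‖f ((WithLp.equiv 1 (A × ℂ)).symm (a, 0))‖ = r} := ⟨‖a‖, hub⟩
  constructor
  · calc (1 / Real.exp 1) * ‖a‖ ≤ 1 * ‖a‖ := by
          have h1 : 1 / Real.exp 1 ≤ 1 := by
            rw [div_le_one (Real.exp_pos 1)]; exact Real.one_le_exp zero_le_one
          exact mul_le_mul_of_nonneg_right h1 (norm_nonneg a)
      _ = ‖a‖ := one_mul _
      _ ≤ _ := le_csSup hbdd hmem
  · exact csSup_le ⟨‖a‖, hmem⟩ hub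
end

section
/- Let A be a complex normed algebra that is faithful, and let a ∈ A. Let L_A = {L_x : x ∈ A} be the subalgebra of B(A) consisting of all left-multiplication operators, equipped with the operator norm. Then the spatial numerical range of L_a computed in the normed algebra L_A is contained in the closed convex hull of V_A(a); that is, V_{L_A}(L_a) ⊆ closed convex hull of V_A(a). -/
/-- The subalgebra `L_A = {L_x : x ∈ A}` of `B(A)` consisting of all left-multiplication
operators, equipped with the operator norm. -/
def leftMulAlgebra (A : Type*) [NonUnitalNormedRing A] [NormedSpace ℂ A]
    [SMulCommClass ℂ A A] [IsScalarTower ℂ A A] :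
    NonUnitalSubalgebra ℂ (A →L[ℂ] A) where
  carrier := Set.range (ContinuousLinearMap.mul ℂ A)
  add_mem' := by
    rintro _ _ ⟨x, rfl⟩ ⟨y, rfl⟩
    exact ⟨x + y, map_add _ x y⟩
  zero_mem' := ⟨0, map_zero _⟩
  mul_mem' := by
    rintro _ _ ⟨x, rfl⟩ ⟨y, rfl⟩
    refine ⟨x * y, ?_⟩
    ext z
    simp [ContinuousLinearMap.mul_apply', ContinuousLinearMap.mul_apply, mul_assoc]
  smul_mem' := by
    rintro c _ ⟨x, rfl⟩
    exact ⟨c • x, map_smul _ c x⟩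


section AuxLemmas

variable {A : Type*} [NonUnitalNormedRing A] [NormedSpace ℂ A]
    [SMulCommClass ℂ A A] [IsScalarTower ℂ A A]

/-- Pointwise lower bound: if `M` dominates the real parts of the spatial numerical range of `b`,
then `‖w - t • (b * w)‖ ≥ (1 - t M) ‖w‖`. -/
lemma lowerBnd' (b : A) (M : ℝ)
    (hM : ∀ x : A, ‖x‖ = 1 → ∀ φ : A →L[ℂ] ℂ, ‖φ‖ = 1 → φ x = 1 → (φ (b * x)).re ≤ M)
    (t : ℝ) (ht : 0 < t) (w : A) :
    (1 - t * M) * ‖w‖ ≤ ‖w - (t : ℂ) • (b * w)‖ := by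
  rcases eq_or_ne w 0 with rfl | hw
  · simp
  obtain ⟨φ, hφ1, hφw⟩ := exists_dual_vector ℂ w (norm_ne_zero_iff.mpr hw)
  have hφw' : φ w = ((‖w‖ : ℝ) : ℂ) := hφw
  have hwpos : (0 : ℝ) < ‖w‖ := norm_pos_iff.mpr hw
  have hne : ((‖w‖ : ℝ) : ℂ) ≠ 0 := by exact_mod_cast hwpos.ne'
  set x : A := ((‖w‖ : ℂ))⁻¹ • w with hxdef
  have hxnorm : ‖x‖ = 1 := by
    rw [hxdef, norm_smul, norm_inv, Complex.norm_real, Real.norm_eq_abs, abs_of_pos hwpos,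
      inv_mul_cancel₀ hwpos.ne']
  have hφx : φ x = 1 := by
    rw [hxdef, map_smul, smul_eq_mul, hφw', inv_mul_cancel₀ hne]
  have hbx : b * x = ((‖w‖ : ℂ))⁻¹ • (b * w) := by rw [hxdef, mul_smul_comm]
  have hre : (φ (b * w)).re ≤ M * ‖w‖ := by
    have h1 := hM x hxnorm φ hφ1 hφx
    rw [hbx, map_smul, smul_eq_mul] at h1
    have h2 : (((‖w‖ : ℂ))⁻¹ * φ (b * w)).re = ‖w‖⁻¹ * (φ (b * w)).re := by
      rw [← Complex.ofReal_inv, Complex.re_ofReal_mul]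
    rw [h2] at h1
    calc (φ (b * w)).re = ‖w‖ * (‖w‖⁻¹ * (φ (b * w)).re) := by field_simp
    _ ≤ ‖w‖ * M := mul_le_mul_of_nonneg_left h1 hwpos.le
    _ = M * ‖w‖ := mul_comm _ _
  have key : (1 - t * M) * ‖w‖ ≤ (φ (w - (t : ℂ) • (b * w))).re := by
    rw [map_sub, map_smul, smul_eq_mul, Complex.sub_re, hφw', Complex.ofReal_re,
      Complex.re_ofReal_mul]
    nlinarith
  calc (1 - t * M) * ‖w‖ ≤ (φ (w - (t : ℂ) • (b * w))).re := key
    _ ≤ ‖φ (w - (t : ℂ) • (b * w))‖ := Complex.re_le_norm _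
    _ ≤ ‖φ‖ * ‖w - (t : ℂ) • (b * w)‖ := φ.le_opNorm _
    _ = ‖w - (t : ℂ) • (b * w)‖ := by rw [hφ1, one_mul]

open ContinuousLinearMap in
/-- Key inequality: a state value at `L_x` applied to `L_b ∘ L_x` has real part at most `M`. -/
lemma keyIneq' (b x : A) (M r : ℝ)
    (hM : ∀ y : A, ‖y‖ = 1 → ∀ φ : A →L[ℂ] ℂ, ‖φ‖ = 1 → φ y = 1 → (φ (b * y)).re ≤ M)
    (hx : ‖ContinuousLinearMap.mul ℂ A x‖ = 1)
    (hr : ∀ t : ℝ, 0 < t → 0 < 1 - t * M →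
      1 + t * r ≤ ‖ContinuousLinearMap.mul ℂ A x +
        (t : ℂ) • ((ContinuousLinearMap.mul ℂ A b).comp (ContinuousLinearMap.mul ℂ A x))‖) :
    r ≤ M := by
  set K : ℝ := ‖b‖ ^ 2 with hK
  have hK0 : 0 ≤ K := by positivity
  have step2 : ∀ t : ℝ, 0 < t → 0 < 1 - t * M →
      ‖ContinuousLinearMap.mul ℂ A x + (t : ℂ) •
        ((ContinuousLinearMap.mul ℂ A b).comp (ContinuousLinearMap.mul ℂ A x))‖
        ≤ (1 + t ^ 2 * K) / (1 - t * M) := by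
    intro t ht h1t
    apply opNorm_le_bound _ (div_nonneg (by positivity) h1t.le)
    intro v
    set u : A := x * v with hu
    have huv : ‖u‖ ≤ ‖v‖ := by
      have := (ContinuousLinearMap.mul ℂ A x).le_opNorm v
      rwa [hx, one_mul, mul_apply'] at this
    have happ : (ContinuousLinearMap.mul ℂ A x + (t : ℂ) •
        ((ContinuousLinearMap.mul ℂ A b).comp (ContinuousLinearMap.mul ℂ A x))) v
        = u + (t : ℂ) • (b * u) := by
      simp [mul_apply', hu]
    rw [happ]
    have hlb := lowerBnd' b M hM t ht (u + (t : ℂ) • (b * u))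
    have hsimp : u + (t : ℂ) • (b * u) - (t : ℂ) • (b * (u + (t : ℂ) • (b * u)))
        = u - (t : ℂ) • ((t : ℂ) • (b * (b * u))) := by
      rw [mul_add, mul_smul_comm, smul_add]
      abel
    rw [hsimp] at hlb
    have hub : ‖u - (t : ℂ) • ((t : ℂ) • (b * (b * u)))‖ ≤ (1 + t ^ 2 * K) * ‖v‖ := by
      have h2 : ‖(t : ℂ) • ((t : ℂ) • (b * (b * u)))‖ = t * (t * ‖b * (b * u)‖) := by
        rw [norm_smul, norm_smul, Complex.norm_real, Real.norm_eq_abs, abs_of_pos ht]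
      have h3 : ‖b * (b * u)‖ ≤ ‖b‖ * (‖b‖ * ‖u‖) :=
        le_trans (norm_mul_le _ _) (by gcongr; exact norm_mul_le _ _)
      calc ‖u - (t : ℂ) • ((t : ℂ) • (b * (b * u)))‖
          ≤ ‖u‖ + ‖(t : ℂ) • ((t : ℂ) • (b * (b * u)))‖ := norm_sub_le _ _
        _ = ‖u‖ + t * (t * ‖b * (b * u)‖) := by rw [h2]
        _ ≤ ‖u‖ + t * (t * (‖b‖ * (‖b‖ * ‖u‖))) := by gcongr
        _ = (1 + t ^ 2 * ‖b‖ ^ 2) * ‖u‖ := by ring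
        _ ≤ (1 + t ^ 2 * K) * ‖v‖ := by rw [hK]; gcongr
    rw [div_mul_eq_mul_div, le_div_iff₀ h1t, mul_comm]
    exact hlb.trans hub
  have step3 : ∀ t : ℝ, 0 < t → 0 < 1 - t * M → r - M ≤ t * (K + r * M) := by
    intro t ht h1t
    have h := le_trans (hr t ht h1t) (step2 t ht h1t)
    rw [le_div_iff₀ h1t] at h
    nlinarith
  by_contra hc
  push_neg at hc
  set δ : ℝ := r - M with hδ
  have hδ0 : 0 < δ := sub_pos.mpr hc
  set D : ℝ := K + r * M with hD
  set t : ℝ := min ((2 * (|M| + 1))⁻¹) (δ / (2 * (|D| + 1))) with htdef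
  have ht : 0 < t := lt_min (by positivity) (by positivity)
  have h1t : 0 < 1 - t * M := by
    have h1 : t ≤ (2 * (|M| + 1))⁻¹ := min_le_left _ _
    have h2 : t * M ≤ t * |M| := mul_le_mul_of_nonneg_left (le_abs_self M) ht.le
    have h3 : t * |M| ≤ (2 * (|M| + 1))⁻¹ * |M| :=
      mul_le_mul_of_nonneg_right h1 (abs_nonneg M)
    have h4 : (0:ℝ) < 2 * (|M| + 1) := by positivity
    have h5 : (2 * (|M| + 1))⁻¹ * (2 * (|M| + 1)) = 1 := inv_mul_cancel₀ h4.ne'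
    nlinarith [abs_nonneg M]
  have h := step3 t ht h1t
  have h6 : t * D ≤ t * (|D| + 1) :=
    mul_le_mul_of_nonneg_left (le_trans (le_abs_self D) (by linarith)) ht.le
  have h7 : t ≤ δ / (2 * (|D| + 1)) := min_le_right _ _
  have h8 : (0:ℝ) < |D| + 1 := by positivity
  have h10 : δ / (2 * (|D| + 1)) * (|D| + 1) = δ / 2 := by field_simp
  linarith [h, h6, mul_le_mul_of_nonneg_right h7 h8.le, h10]

end AuxLemmas

set_option maxHeartbeats 1000000 in
set_option synthInstance.maxHeartbeats 1000000 in
theorem stmt17 {A : Type*} [NonUnitalNormedRing A] [NormedSpace ℂ A]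
    [SMulCommClass ℂ A A] [IsScalarTower ℂ A A]
    (hfaithful : ∀ b : A, (∀ x : A, b * x = 0) → b = 0)
    (a : A) :
    @spatialNumericalRange _ _ (SubmoduleClass.toNormedSpace _)
        (⟨ContinuousLinearMap.mul ℂ A a, ⟨a, rfl⟩⟩ : leftMulAlgebra A) ⊆
      closure (convexHull ℝ (spatialNumericalRange a)) := by
  intro z hz
  obtain ⟨T, hT, Φ, hΦ, hΦT, hΦz⟩ := hz
  by_contra hzc
  obtain ⟨f, u, hfz, hfw⟩ := geometric_hahn_banach_point_closed
    ((convex_convexHull ℝ _).closure) isClosed_closure hzc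
  -- the complex number representing f
  set c : ℂ := ⟨f 1, f Complex.I⟩ with hc
  have hfc : ∀ w : ℂ, f w = ((starRingEnd ℂ) c * w).re := by
    intro w
    have hw : w = w.re • (1 : ℂ) + w.im • Complex.I := by
      simp [Complex.real_smul, Complex.re_add_im]
    calc f w = f (w.re • (1 : ℂ) + w.im • Complex.I) := by rw [← hw]
      _ = w.re * f 1 + w.im * f Complex.I := by
          rw [map_add, map_smul, map_smul, smul_eq_mul, smul_eq_mul]
      _ = ((starRingEnd ℂ) c * w).re := by
          simp [Complex.mul_re, hc]
          ring
  set b : A := -((starRingEnd ℂ) c) • a with hb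
  set M : ℝ := -u with hMdef
  have hMb : ∀ y : A, ‖y‖ = 1 → ∀ φ : A →L[ℂ] ℂ, ‖φ‖ = 1 → φ y = 1 → (φ (b * y)).re ≤ M := by
    intro y hy φ hφ1 hφy
    have hmem : φ (a * y) ∈ spatialNumericalRange a := ⟨y, hy, φ, hφ1, hφy, rfl⟩
    have h1 : u < f (φ (a * y)) := hfw _ (subset_closure (subset_convexHull ℝ _ hmem))
    have h2 : b * y = -((starRingEnd ℂ) c) • (a * y) := by rw [hb, smul_mul_assoc]
    have h3 : (φ (b * y)).re = -(((starRingEnd ℂ) c) * φ (a * y)).re := by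
      rw [h2, map_smul, smul_eq_mul, neg_mul, Complex.neg_re]
    rw [h3, ← hfc]
    rw [hMdef]
    linarith
  -- unpack T as a left multiplication
  obtain ⟨x, hxval⟩ := T.2
  have hxnorm : ‖ContinuousLinearMap.mul ℂ A x‖ = 1 := by
    rw [hxval]; exact hT
  -- the element W = L_b * T
  set W : leftMulAlgebra A :=
    (⟨ContinuousLinearMap.mul ℂ A b, ⟨b, rfl⟩⟩ : leftMulAlgebra A) * T with hW
  have hWsmul : W = (-((starRingEnd ℂ) c)) •
      ((⟨ContinuousLinearMap.mul ℂ A a, ⟨a, rfl⟩⟩ : leftMulAlgebra A) * T) := by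
    apply Subtype.ext
    show (ContinuousLinearMap.mul ℂ A b).comp (T : A →L[ℂ] A)
      = -((starRingEnd ℂ) c) • ((ContinuousLinearMap.mul ℂ A a).comp (T : A →L[ℂ] A))
    rw [hb, map_smul, ContinuousLinearMap.smul_comp]
  have hΦW : Φ W = -((starRingEnd ℂ) c) * z := by
    rw [hWsmul, map_smul, hΦz, smul_eq_mul]
  set r : ℝ := (Φ W).re with hrdef
  have hrM : M < r := by
    have : r = -(((starRingEnd ℂ) c) * z).re := by
      rw [hrdef, hΦW, neg_mul, Complex.neg_re]
    rw [this, hMdef, ← hfc]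
    linarith
  -- the state inequality
  have hr : ∀ t : ℝ, 0 < t → 0 < 1 - t * M →
      1 + t * r ≤ ‖ContinuousLinearMap.mul ℂ A x +
        (t : ℂ) • ((ContinuousLinearMap.mul ℂ A b).comp (ContinuousLinearMap.mul ℂ A x))‖ := by
    intro t ht _
    have h1 : Φ (T + (t : ℂ) • W) = 1 + (t : ℂ) * Φ W := by
      rw [map_add, map_smul, hΦT, smul_eq_mul]
    have h2 : (Φ (T + (t : ℂ) • W)).re = 1 + t * r := by
      rw [h1, Complex.add_re, Complex.one_re, Complex.re_ofReal_mul, hrdef]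
    have h3 : (Φ (T + (t : ℂ) • W)).re ≤ ‖T + (t : ℂ) • W‖ :=
      calc (Φ (T + (t : ℂ) • W)).re ≤ ‖Φ (T + (t : ℂ) • W)‖ := Complex.re_le_norm _
        _ ≤ ‖T + (t : ℂ) • W‖ := (Φ.le_opNorm _).trans_eq (by erw [hΦ, one_mul]; rfl)
    have h4 : ‖T + (t : ℂ) • W‖ = ‖ContinuousLinearMap.mul ℂ A x +
        (t : ℂ) • ((ContinuousLinearMap.mul ℂ A b).comp (ContinuousLinearMap.mul ℂ A x))‖ := by
      have hcoe : ((T + (t : ℂ) • W : leftMulAlgebra A) : A →L[ℂ] A)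
          = (T : A →L[ℂ] A) +
            (t : ℂ) • ((ContinuousLinearMap.mul ℂ A b).comp (T : A →L[ℂ] A)) := rfl
      show ‖((T + (t : ℂ) • W : leftMulAlgebra A) : A →L[ℂ] A)‖ = _
      rw [hcoe, ← hxval]
    linarith
  have hfinal := keyIneq' b x M r hMb hxnorm hr
  linarith
end

section
/- Let A be a complex normed algebra that is faithful and has no identity element, let a ∈ A, and let λ ∈ ℂ. Then {F(L_a + λ·id_A) : F a continuous linear functional on B(A) with ‖F‖ = 1 and F(id_A) = 1} is contained in {f((a, λ)) : f a continuous linear functional on A_e^1 with ‖f‖ = 1 and f((0, 1)) = 1}, where A_e^1 is the unitization A × ℂ with the ℓ¹-norm ‖(b, μ)‖ = ‖b‖ + |μ|. -/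
open ContinuousLinearMap

theorem ContinuousLinearMap.norm_comp_eq_one_of_apply_eq_one {𝕜 E F : Type*}
    [NontriviallyNormedField 𝕜] [SeminormedAddCommGroup E] [NormedSpace 𝕜 E]
    [SeminormedAddCommGroup F] [NormedSpace 𝕜 F]
    {φ : StrongDual 𝕜 F} {T : E →L[𝕜] F} (hφ : ‖φ‖ = 1) (hT : ‖T‖ ≤ 1)
    {e : E} (he : ‖e‖ ≤ 1) (h : φ (T e) = 1) : ‖φ.comp T‖ = 1 := by
  refine le_antisymm ?_ ?_
  · calc ‖φ.comp T‖ ≤ ‖φ‖ * ‖T‖ := opNorm_comp_le φ T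
      _ ≤ 1 := by rw [hφ, one_mul]; exact hT
  · calc (1 : ℝ) = ‖φ.comp T e‖ := by simp [h]
      _ ≤ ‖φ.comp T‖ * ‖e‖ := le_opNorm _ e
      _ ≤ ‖φ.comp T‖ := mul_le_of_le_one_right (norm_nonneg _) he

section LmulUnitizationL1

variable (𝕜 A : Type*) [NontriviallyNormedField 𝕜] [NonUnitalSeminormedRing A]
  [NormedSpace 𝕜 A] [IsScalarTower 𝕜 A A] [SMulCommClass 𝕜 A A]

noncomputable def lmulUnitizationL1 : WithLp 1 (A × 𝕜) →L[𝕜] A →L[𝕜] A :=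
  ((mul 𝕜 A).comp (fst 𝕜 A 𝕜) + (snd 𝕜 A 𝕜).smulRight (ContinuousLinearMap.id 𝕜 A)).comp
    (WithLp.prodContinuousLinearEquiv 1 𝕜 A 𝕜).toContinuousLinearMap

variable {𝕜 A}

@[simp]
theorem lmulUnitizationL1_apply (x : WithLp 1 (A × 𝕜)) :
    lmulUnitizationL1 𝕜 A x = mul 𝕜 A x.fst + x.snd • ContinuousLinearMap.id 𝕜 A :=
  rfl

theorem norm_lmulUnitizationL1_le : ‖lmulUnitizationL1 𝕜 A‖ ≤ 1 := by
  refine opNorm_le_bound _ zero_le_one fun x => ?_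
  rw [one_mul, WithLp.prod_norm_eq_of_L1, lmulUnitizationL1_apply]
  calc ‖mul 𝕜 A x.fst + x.snd • ContinuousLinearMap.id 𝕜 A‖
      ≤ ‖mul 𝕜 A x.fst‖ + ‖x.snd • ContinuousLinearMap.id 𝕜 A‖ := norm_add_le _ _
    _ ≤ ‖x.fst‖ + ‖x.snd‖ := by
      gcongr
      · exact opNorm_mul_apply_le 𝕜 A x.fst
      · exact (opNorm_smul_le _ _).trans
          (mul_le_of_le_one_right (norm_nonneg _) ContinuousLinearMap.norm_id_le)

end LmulUnitizationL1

theorem stmt18_general {A : Type*} [NonUnitalNormedRing A] [NormedSpace ℂ A]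
    [SMulCommClass ℂ A A] [IsScalarTower ℂ A A]
    (a : A) (lam : ℂ) :
    {z : ℂ | ∃ F : (A →L[ℂ] A) →L[ℂ] ℂ, ‖F‖ = 1 ∧
        F (ContinuousLinearMap.id ℂ A) = 1 ∧
        F (ContinuousLinearMap.mul ℂ A a + lam • ContinuousLinearMap.id ℂ A) = z} ⊆
      {z : ℂ | ∃ f : unitizationL1 A →L[ℂ] ℂ, ‖f‖ = 1 ∧
        f ((WithLp.equiv 1 (A × ℂ)).symm (0, 1)) = 1 ∧
        f ((WithLp.equiv 1 (A × ℂ)).symm (a, lam)) = z} := by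
  rintro z ⟨F, hF, hF_id, rfl⟩
  have h_unit_norm : ‖(WithLp.equiv 1 (A × ℂ)).symm ((0 : A), (1 : ℂ))‖ ≤ 1 := by simp
  have h_unit : F.comp (lmulUnitizationL1 ℂ A) ((WithLp.equiv 1 (A × ℂ)).symm (0, 1)) = 1 := by
    simp [hF_id]
  refine ⟨F.comp (lmulUnitizationL1 ℂ A), ?_, h_unit, by simp⟩
  exact norm_comp_eq_one_of_apply_eq_one hF norm_lmulUnitizationL1_le h_unit_norm h_unit

theorem stmt18 {A : Type*} [NonUnitalNormedRing A] [NormedSpace ℂ A]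
    [SMulCommClass ℂ A A] [IsScalarTower ℂ A A]
    (hfaithful : ∀ b : A, (∀ x : A, b * x = 0) → b = 0)
    (hnoid : ¬ ∃ e : A, ∀ x : A, e * x = x ∧ x * e = x)
    (a : A) (lam : ℂ) :
    {z : ℂ | ∃ F : (A →L[ℂ] A) →L[ℂ] ℂ, ‖F‖ = 1 ∧
        F (ContinuousLinearMap.id ℂ A) = 1 ∧
        F (ContinuousLinearMap.mul ℂ A a + lam • ContinuousLinearMap.id ℂ A) = z} ⊆
      {z : ℂ | ∃ f : unitizationL1 A →L[ℂ] ℂ, ‖f‖ = 1 ∧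
        f ((WithLp.equiv 1 (A × ℂ)).symm (0, 1)) = 1 ∧
        f ((WithLp.equiv 1 (A × ℂ)).symm (a, lam)) = z} :=
  stmt18_general a lam
end

section
/- Let A = ℂ² with the supremum norm ‖(x₁, x₂)‖ = max(|x₁|, |x₂|) and the product x * y = (x₁y₁, x₂y₁) (i.e. x * y = y₁ • x). Then A is a complex normed algebra with no identity element, and for every a = (a₁, a₂) ∈ A the spatial numerical range is V_A(a) = {r·a₁ + w·a₂ : r ∈ [0, 1], w ∈ ℂ, |w| = 1 − r}. -/
/-- `A = ℂ²` with the supremum norm `‖(x₁, x₂)‖ = max (|x₁|, |x₂|)`. -/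
def Csq : Type := ℂ × ℂ

noncomputable instance : NormedAddCommGroup Csq :=
  inferInstanceAs (NormedAddCommGroup (ℂ × ℂ))

noncomputable instance : NormedSpace ℂ Csq :=
  inferInstanceAs (NormedSpace ℂ (ℂ × ℂ))

namespace Csq

/-- First coordinate. -/
def fst (x : Csq) : ℂ := (show ℂ × ℂ from x).1

/-- Second coordinate. -/
def snd (x : Csq) : ℂ := (show ℂ × ℂ from x).2

/-- The product `x * y = (x₁y₁, x₂y₁)`. -/
noncomputable instance : Mul Csq :=
  ⟨fun x y => (show Csq from ((x.fst * y.fst, x.snd * y.fst) : ℂ × ℂ))⟩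

lemma mul_def (x y : Csq) : x * y = (show Csq from ((x.fst * y.fst, x.snd * y.fst) : ℂ × ℂ)) :=
  rfl

lemma norm_def (x : Csq) : ‖x‖ = max ‖x.fst‖ ‖x.snd‖ := rfl

noncomputable instance : NonUnitalNormedRing Csq :=
  { (inferInstance : NormedAddCommGroup Csq) with
    mul := (· * ·)
    left_distrib := fun a b c => by
      show ((a.fst * (b.fst + c.fst), a.snd * (b.fst + c.fst)) : ℂ × ℂ) =
        ((a.fst * b.fst + a.fst * c.fst, a.snd * b.fst + a.snd * c.fst) : ℂ × ℂ)
      exact Prod.ext (mul_add _ _ _) (mul_add _ _ _)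
    right_distrib := fun a b c => by
      show (((a.fst + b.fst) * c.fst, (a.snd + b.snd) * c.fst) : ℂ × ℂ) =
        ((a.fst * c.fst + b.fst * c.fst, a.snd * c.fst + b.snd * c.fst) : ℂ × ℂ)
      exact Prod.ext (add_mul _ _ _) (add_mul _ _ _)
    mul_assoc := fun a b c => by
      show ((a.fst * b.fst * c.fst, a.snd * b.fst * c.fst) : ℂ × ℂ) =
        ((a.fst * (b.fst * c.fst), a.snd * (b.fst * c.fst)) : ℂ × ℂ)
      exact Prod.ext (mul_assoc _ _ _) (mul_assoc _ _ _)
    zero_mul := fun a => by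
      show (((0 : ℂ) * a.fst, (0 : ℂ) * a.fst) : ℂ × ℂ) = ((0, 0) : ℂ × ℂ)
      exact Prod.ext (zero_mul _) (zero_mul _)
    mul_zero := fun a => by
      show ((a.fst * (0 : ℂ), a.snd * (0 : ℂ)) : ℂ × ℂ) = ((0, 0) : ℂ × ℂ)
      exact Prod.ext (mul_zero _) (mul_zero _)
    norm_mul_le := fun x y => by
      rw [norm_def x, norm_def y]
      have h : ‖x * y‖ = max (‖x.fst‖ * ‖y.fst‖) (‖x.snd‖ * ‖y.fst‖) := by
        rw [norm_def (x * y)]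
        show max ‖x.fst * y.fst‖ ‖x.snd * y.fst‖ = _
        rw [norm_mul, norm_mul]
      rw [h, ← max_mul_of_nonneg _ _ (norm_nonneg y.fst)]
      refine mul_le_mul_of_nonneg_left ?_ (le_trans (norm_nonneg _) (le_max_left _ _))
      exact le_max_left _ _ }

/-- The basis vector `(1,0)`. -/
noncomputable def e1 : Csq := (show Csq from ((1, 0) : ℂ × ℂ))

/-- The basis vector `(0,1)`. -/
noncomputable def e2 : Csq := (show Csq from ((0, 1) : ℂ × ℂ))

lemma mul_eq_smul (a x : Csq) : a * x = x.fst • a := by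
  show ((a.fst * x.fst, a.snd * x.fst) : ℂ × ℂ) = ((x.fst * a.fst, x.fst * a.snd) : ℂ × ℂ)
  exact Prod.ext (mul_comm _ _) (mul_comm _ _)

lemma decomp (y : Csq) : y = y.fst • e1 + y.snd • e2 := by
  show (show ℂ × ℂ from y) =
    ((y.fst * 1 + y.snd * 0, y.fst * 0 + y.snd * 1) : ℂ × ℂ)
  simp [fst, snd]
  rfl

lemma rep (φ : Csq →L[ℂ] ℂ) (y : Csq) :
    φ y = φ e1 * y.fst + φ e2 * y.snd := by
  conv_lhs => rw [decomp y]
  rw [map_add, map_smul, map_smul, smul_eq_mul, smul_eq_mul]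
  ring

/-- The linear functional `(y₁, y₂) ↦ α y₁ + β y₂`. -/
noncomputable def phiAux (α β : ℂ) : Csq →ₗ[ℂ] ℂ where
  toFun y := α * y.fst + β * y.snd
  map_add' y z := by
    show α * (y.fst + z.fst) + β * (y.snd + z.snd) = _
    ring
  map_smul' c y := by
    show α * (c * y.fst) + β * (c * y.snd) = c * (α * y.fst + β * y.snd)
    ring

/-- The corresponding continuous linear functional. -/
noncomputable def phi (α β : ℂ) : Csq →L[ℂ] ℂ :=
  LinearMap.mkContinuous (phiAux α β) (‖α‖ + ‖β‖) (fun y => by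
    show ‖α * y.fst + β * y.snd‖ ≤ _
    calc ‖α * y.fst + β * y.snd‖ ≤ ‖α * y.fst‖ + ‖β * y.snd‖ := norm_add_le _ _
    _ = ‖α‖ * ‖y.fst‖ + ‖β‖ * ‖y.snd‖ := by rw [norm_mul, norm_mul]
    _ ≤ ‖α‖ * ‖y‖ + ‖β‖ * ‖y‖ := by
        gcongr
        · rw [norm_def]; exact le_max_left _ _
        · rw [norm_def]; exact le_max_right _ _
    _ = (‖α‖ + ‖β‖) * ‖y‖ := by ring)

lemma phi_apply (α β : ℂ) (y : Csq) : phi α β y = α * y.fst + β * y.snd := rfl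

lemma phi_norm_le (α β : ℂ) : ‖phi α β‖ ≤ ‖α‖ + ‖β‖ :=
  LinearMap.mkContinuous_norm_le _ (by positivity) _

lemma exists_unit (α : ℂ) : ∃ c : ℂ, ‖c‖ ≤ 1 ∧ α * c = ‖α‖ := by
  rcases eq_or_ne α 0 with h | h
  · exact ⟨0, by simp, by simp [h]⟩
  · refine ⟨(starRingEnd ℂ) α / ‖α‖, ?_, ?_⟩
    · simp [h]
    · have hne : ((‖α‖ : ℝ) : ℂ) ≠ 0 := by simpa using norm_ne_zero_iff.mpr h
      rw [mul_div_assoc', Complex.mul_conj']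
      rw [sq, mul_div_assoc,
        div_self hne, mul_one]

lemma adjust (a₁ a₂ : ℂ) (r₀ : ℝ) (hr₀ : 0 ≤ r₀) (hr₁ : r₀ ≤ 1) (w₀ : ℂ)
    (hw₀ : ‖w₀‖ ≤ 1 - r₀) :
    ∃ r : ℝ, r ∈ Set.Icc (0 : ℝ) 1 ∧ ∃ w : ℂ, ‖w‖ = 1 - r ∧
      (r₀ : ℂ) * a₁ + w₀ * a₂ = (r : ℂ) * a₁ + w * a₂ := by
  rcases eq_or_ne a₂ 0 with h2 | h2
  · refine ⟨r₀, ⟨hr₀, hr₁⟩, ((1 - r₀ : ℝ) : ℂ), ?_, by simp [h2]⟩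
    rw [Complex.norm_real, Real.norm_eq_abs]
    exact abs_of_nonneg (by linarith)
  · set b : ℂ := a₁ / a₂ with hb
    set f : ℝ → ℝ := fun r => ‖w₀ + ((r₀ : ℂ) - (r : ℂ)) * b‖ + r with hf
    have hcont : ContinuousOn f (Set.Icc r₀ 1) := by
      apply Continuous.continuousOn
      exact (continuous_norm.comp (by continuity)).add continuous_id
    have hmem : (1 : ℝ) ∈ Set.Icc (f r₀) (f 1) := by
      constructor
      · simp only [hf, sub_self, zero_mul, add_zero]
        linarith
      · have : (0:ℝ) ≤ ‖w₀ + ((r₀ : ℂ) - 1) * b‖ := norm_nonneg _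
        simp only [hf]
        push_cast
        linarith
    obtain ⟨r, hrmem, hfr⟩ := intermediate_value_Icc hr₁ hcont hmem
    refine ⟨r, ⟨le_trans hr₀ hrmem.1, hrmem.2⟩, w₀ + ((r₀ : ℂ) - (r : ℂ)) * b, ?_, ?_⟩
    · simp only [hf] at hfr; linarith
    · rw [hb]; field_simp
      ring

end Csq

theorem stmt19 :
    (¬ ∃ e : Csq, ∀ x : Csq, e * x = x ∧ x * e = x) ∧
    ∀ a : Csq, spatialNumericalRange a =
      {z : ℂ | ∃ r : ℝ, r ∈ Set.Icc (0 : ℝ) 1 ∧ ∃ w : ℂ,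
        ‖w‖ = 1 - r ∧ z = r * a.fst + w * a.snd} := by
  constructor
  · rintro ⟨e, he⟩
    have h := (he (show Csq from ((0, 1) : ℂ × ℂ))).1
    have h2 : e.snd * (0 : ℂ) = 1 := congrArg Csq.snd h
    simp at h2
  · intro a
    ext z
    simp only [spatialNumericalRange, Set.mem_setOf_eq]
    constructor
    · rintro ⟨x, hx, φ, hφ, hφx, hz⟩
      set α := φ Csq.e1 with hα
      set β := φ Csq.e2 with hβ
      have hrep := Csq.rep φ
      have h1 : α * x.fst + β * x.snd = 1 := by rw [← hrep x, hφx]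
      obtain ⟨c₁, hc₁, hac₁⟩ := Csq.exists_unit α
      obtain ⟨c₂, hc₂, hac₂⟩ := Csq.exists_unit β
      have hab : ‖α‖ + ‖β‖ ≤ 1 := by
        set u : Csq := (show Csq from ((c₁, c₂) : ℂ × ℂ)) with hu
        have hun : ‖u‖ ≤ 1 := by
          rw [Csq.norm_def]
          exact max_le hc₁ hc₂
        have hval : φ u = ((‖α‖ + ‖β‖ : ℝ) : ℂ) := by
          rw [hrep u]
          show α * c₁ + β * c₂ = _
          rw [hac₁, hac₂]; push_cast; ring
        have hle := φ.le_opNorm u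
        rw [hval, Complex.norm_real, Real.norm_eq_abs,
          abs_of_nonneg (by positivity)] at hle
        calc ‖α‖ + ‖β‖ ≤ ‖φ‖ * ‖u‖ := hle
        _ ≤ 1 := by rw [hφ]; simpa using hun
      have hx1 : ‖x.fst‖ ≤ 1 := by
        rw [← hx, Csq.norm_def]; exact le_max_left _ _
      have hx2 : ‖x.snd‖ ≤ 1 := by
        rw [← hx, Csq.norm_def]; exact le_max_right _ _
      have hpa : ‖α‖ * ‖x.fst‖ ≤ ‖α‖ := mul_le_of_le_one_right (norm_nonneg _) hx1
      have hpb : ‖β‖ * ‖x.snd‖ ≤ ‖β‖ := mul_le_of_le_one_right (norm_nonneg _) hx2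
      have hre : (α * x.fst).re + (β * x.snd).re = 1 := by
        have := congrArg Complex.re h1
        simpa using this
      have hre1 : (α * x.fst).re ≤ ‖α‖ * ‖x.fst‖ := by
        calc (α * x.fst).re ≤ ‖α * x.fst‖ := Complex.re_le_norm _
        _ = ‖α‖ * ‖x.fst‖ := by rw [norm_mul]
      have hre2 : (β * x.snd).re ≤ ‖β‖ * ‖x.snd‖ := by
        calc (β * x.snd).re ≤ ‖β * x.snd‖ := Complex.re_le_norm _
        _ = ‖β‖ * ‖x.snd‖ := by rw [norm_mul]
      have ea : (α * x.fst).re = ‖α‖ := by linarith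
      have hq : ‖β‖ = 1 - ‖α‖ := by linarith
      have hax : α * x.fst = ((‖α‖ : ℝ) : ℂ) := by
        have hA : ‖α * x.fst‖ = ‖α‖ := by
          refine le_antisymm ?_ (ea ▸ Complex.re_le_norm _)
          rw [norm_mul]; exact hpa
        have hsq := Complex.sq_norm (α * x.fst)
        rw [Complex.normSq_apply, hA, ea] at hsq
        have him : (α * x.fst).im = 0 := by nlinarith [sq_nonneg (α * x.fst).im]
        exact Complex.ext (by simp [ea]) (by simp [him])
      have hzval : z = ((‖α‖ : ℝ) : ℂ) * a.fst + (β * x.fst) * a.snd := by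
        rw [← hax, ← hz, Csq.mul_eq_smul, map_smul, smul_eq_mul, hrep a]
        ring
      have hw0 : ‖β * x.fst‖ ≤ 1 - ‖α‖ := by
        rw [norm_mul, ← hq]
        exact mul_le_of_le_one_right (norm_nonneg _) hx1
      obtain ⟨r, hr, w, hwabs, heq⟩ :=
        Csq.adjust a.fst a.snd ‖α‖ (norm_nonneg _)
          (by have := norm_nonneg β; linarith) _ hw0
      exact ⟨r, hr, w, hwabs, by rw [hzval, heq]⟩
    · rintro ⟨r, ⟨hr0, hr1⟩, w, hw, hz⟩
      obtain ⟨c, hc, hwc⟩ := Csq.exists_unit w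
      have hwn : ‖w‖ = 1 - r := by rw [hw]
      set x : Csq := (show Csq from ((1, c) : ℂ × ℂ)) with hxdef
      set φ := Csq.phi ((r : ℝ) : ℂ) w with hφdef
      have hxn : ‖x‖ = 1 := by
        rw [Csq.norm_def]
        show max ‖(1 : ℂ)‖ ‖c‖ = 1
        rw [norm_one]
        exact max_eq_left hc
      have happ : φ x = 1 := by
        rw [hφdef, Csq.phi_apply]
        show ((r : ℝ) : ℂ) * 1 + w * c = 1
        rw [hwc, hwn]
        push_cast; ring
      have hφn : ‖φ‖ = 1 := by
        refine le_antisymm ?_ ?_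
        · have hb := Csq.phi_norm_le ((r : ℝ) : ℂ) w
          rw [hwn, Complex.norm_real, Real.norm_eq_abs, abs_of_nonneg hr0] at hb
          rw [hφdef]
          linarith
        · have h := φ.le_opNorm x
          rw [happ, hxn, mul_one, norm_one] at h
          exact h
      refine ⟨x, hxn, φ, hφn, happ, ?_⟩
      rw [hφdef, Csq.phi_apply]
      show ((r : ℝ) : ℂ) * (a.fst * 1) + w * (a.snd * 1) = z
      rw [hz]; ring
end
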